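/- arXiv:2209.01253 — 5 statements merged into one kernel-verified Lean document; each statement's English description precedes it below -/
import Mathlib

section
/- For every b > 0 there exists θ ∈ (0,1) with the following property. Let I ⊂ ℝ be a bounded interval and let 𝒥 = {J₁, …, J_n} be a finite collection of pairwise disjoint closed subintervals of I such that: (1) for all distinct J′, J″ ∈ 𝒥 one has dist(J′, J″) ≥ min(|J′|, |J″|)^{1+b}; (2) the total length Σ_{i=1}^n |J_i| is greater than (1−θ)|I|; (3) every connected component of I \ ⋃_{i=1}^n J_i has length at least 1. Then there exists J ∈ 𝒥 with |J| ≥ (3/4)|I|. -/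
/-!
Suppose every interval is shorter than `3|I|/4`. Consecutive intervals are separated by a
component of `I \ ⋃ J` of length `≥ 1`, so packing the `n` intervals and the `n - 1` gaps into `I`
gives `n - 1 ≤ |I| - ∑ |J| < θ|I|`. List the lengths decreasingly, `s₀ ≥ s₁ ≥ ⋯`: the `k + 1`
longest intervals are pairwise at distance `≥ s_k^(1+b)`, so packing them gives
`k s_k^(1+b) ≤ |I|`. With `α = 1/(1+b)` this yields
`∑_{k ≥ 1} s_k ≤ |I|^α ∑_{1 ≤ k < n} k^(-α) ≤ |I|^α (n-1)^(1-α) / (1-α) ≤ θ^(1-α) |I| / (1-α)`,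
which equals `|I|/8` for `θ = ((1-α)/8)^(1/(1-α))`. Together with `s₀ < 3|I|/4` the total length
stays below `(1-θ)|I|`, a contradiction.
-/

open MeasureTheory Set Finset

theorem mul_rpow_neg_le_rpow_sub_rpow {α x : ℝ} (hα0 : 0 ≤ α) (hα1 : α ≤ 1) (hx : 1 ≤ x) :
    (1 - α) * x ^ (-α) ≤ x ^ (1 - α) - (x - 1) ^ (1 - α) := by
  have hx0 : 0 < x := by linarith
  have hinv : x⁻¹ ≤ 1 := inv_le_one_of_one_le₀ hx
  have hbern : (1 + -x⁻¹) ^ (1 - α) ≤ 1 + (1 - α) * -x⁻¹ :=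
    rpow_one_add_le_one_add_mul_self (by linarith) (by linarith) (by linarith)
  have hsub : (x - 1) ^ (1 - α) = (1 + -x⁻¹) ^ (1 - α) * x ^ (1 - α) := by
    rw [← Real.mul_rpow (by linarith) hx0.le]
    congr 1; field_simp; ring
  have hneg : x ^ (-α) = x ^ (1 - α) * x⁻¹ := by
    rw [show -α = 1 - α - 1 by ring, Real.rpow_sub_one hx0.ne', div_eq_mul_inv]
  have := mul_le_mul_of_nonneg_right hbern (Real.rpow_nonneg hx0.le (1 - α))
  rw [hsub, hneg]
  linarith

theorem sum_range_add_one_rpow_neg_le {α : ℝ} (hα0 : 0 ≤ α) (hα1 : α < 1) (N : ℕ) :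
    ∑ j ∈ range N, ((j : ℝ) + 1) ^ (-α) ≤ (N : ℝ) ^ (1 - α) / (1 - α) := by
  rw [le_div_iff₀ (sub_pos.2 hα1), Finset.sum_mul]
  calc ∑ j ∈ range N, ((j : ℝ) + 1) ^ (-α) * (1 - α)
      ≤ ∑ j ∈ range N, (((j + 1 : ℕ) : ℝ) ^ (1 - α) - (j : ℝ) ^ (1 - α)) := by
        gcongr with j
        have := mul_rpow_neg_le_rpow_sub_rpow hα0 hα1.le (le_add_of_nonneg_left j.cast_nonneg)
        push_cast
        simpa [mul_comm] using this
    _ = (N : ℝ) ^ (1 - α) := by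
        rw [sum_range_sub (fun j : ℕ => (j : ℝ) ^ (1 - α))]
        simp [Real.zero_rpow (sub_pos.2 hα1).ne']

theorem exists_pos_le_rpow_eq {c p : ℝ} (hc0 : 0 < c) (hc1 : c ≤ 1) (hp0 : 0 < p) (hp1 : p ≤ 1) :
    ∃ θ, 0 < θ ∧ θ ≤ c ∧ θ ^ p = c :=
  ⟨c ^ p⁻¹, by positivity,
    Real.rpow_le_self_of_le_one hc0.le hc1 ((one_le_inv₀ hp0).mpr hp1),
    Real.rpow_inv_rpow hc0.le hp0.ne'⟩

theorem rpow_mul_rpow_le_of_le_mul {m x θ α : ℝ} (hm : 0 ≤ m) (hθ : 0 ≤ θ) (hα : α ≤ 1)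
    (hx : 0 ≤ x) (hxm : x ≤ θ * m) : m ^ α * x ^ (1 - α) ≤ θ ^ (1 - α) * m := calc
  m ^ α * x ^ (1 - α) ≤ m ^ α * (θ * m) ^ (1 - α) := by gcongr
  _ = θ ^ (1 - α) * (m ^ α * m ^ (1 - α)) := by rw [Real.mul_rpow hθ hm]; ring
  _ = θ ^ (1 - α) * m := by rw [← Real.rpow_add' hm (by norm_num), add_sub_cancel, Real.rpow_one]

theorem connectedComponentIn_subset_Ioo {U : Set ℝ} {a b x : ℝ} (hx : x ∈ Ioo a b)
    (ha : a ∉ U) (hb : b ∉ U) : connectedComponentIn U x ⊆ Ioo a b := by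
  have hC : (connectedComponentIn U x).OrdConnected :=
    isPreconnected_connectedComponentIn.ordConnected
  intro y hy
  by_cases hxU : x ∈ U
  · have hxC := mem_connectedComponentIn hxU
    constructor
    · by_contra! h
      exact ha (connectedComponentIn_subset U x (hC.out hy hxC ⟨h, hx.1.le⟩))
    · by_contra! h
      exact hb (connectedComponentIn_subset U x (hC.out hxC hy ⟨hx.2.le, h⟩))
  · simp [connectedComponentIn_eq_empty hxU] at hy

theorem Set.OrdConnected.exists_subset_Icc_sub_le_volume {I : Set ℝ} (hI : I.OrdConnected)
    (hbdd : Bornology.IsBounded I) (hne : I.Nonempty) :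
    ∃ a B, I ⊆ Icc a B ∧ B - a ≤ (volume I).toReal := by
  refine ⟨sInf I, sSup I, subset_Icc_csInf_csSup hbdd.bddBelow hbdd.bddAbove, ?_⟩
  have hIoo : Ioo (sInf I) (sSup I) ⊆ I :=
    IsConnected.Ioo_csInf_csSup_subset ⟨hne, hI.isPreconnected⟩ hbdd.bddBelow hbdd.bddAbove
  have hle : sInf I ≤ sSup I := csInf_le_csSup hne hbdd.bddBelow hbdd.bddAbove
  calc sSup I - sInf I = (volume (Ioo (sInf I) (sSup I))).toReal := by
        simp [Real.volume_Ioo, hle]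
    _ ≤ (volume I).toReal := ENNReal.toReal_mono hbdd.measure_lt_top.ne (measure_mono hIoo)

theorem lt_of_disjoint_Icc {a b c d : ℝ} (h : Disjoint (Icc a b) (Icc c d)) (hac : a ≤ c)
    (hcd : c ≤ d) : b < c := by
  by_contra! hbc
  exact Set.disjoint_left.mp h ⟨hac, hbc⟩ ⟨le_rfl, hcd⟩

section Intervals

variable {ι : Type*} {l r : ι → ℝ}

theorem sum_sub_add_card_sub_one_mul_le_volume {I : Set ℝ} (hI : I.OrdConnected)
    (hbdd : Bornology.IsBounded I) {T : Finset ι} (hT : T.Nonempty) {g : ℝ}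
    (hlr : ∀ i ∈ T, l i ≤ r i) (hsub : ∀ i ∈ T, Icc (l i) (r i) ⊆ I) (hg : 0 ≤ g)
    (hsep : ∀ i ∈ T, ∀ j ∈ T, i ≠ j → l i ≤ l j → r i + g ≤ l j) :
    ∑ i ∈ T, (r i - l i) + ((#T : ℝ) - 1) * g ≤ (volume I).toReal := by
  obtain ⟨i₀, hi₀⟩ := hT
  obtain ⟨a, B, hIab, hBa⟩ :=
    hI.exists_subset_Icc_sub_le_volume hbdd ⟨l i₀, hsub i₀ hi₀ ⟨le_rfl, hlr i₀ hi₀⟩⟩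
  have hal : ∀ i ∈ T, a ≤ l i := fun i hi ↦ (hIab (hsub i hi ⟨le_rfl, hlr i hi⟩)).1
  have hrB : ∀ i ∈ T, r i ≤ B := fun i hi ↦ (hIab (hsub i hi ⟨hlr i hi, le_rfl⟩)).2
  have hdisj_of_le : ∀ i ∈ T, ∀ j ∈ T, i ≠ j → l i ≤ l j →
      Disjoint (Ico (l i) (r i + g)) (Ico (l j) (r j + g)) := fun i hi j hj hij h ↦
    Set.disjoint_left.mpr fun x hx hx' ↦ by linarith [hsep i hi j hj hij h, hx.2, hx'.1]
  have hdisj : (T : Set ι).PairwiseDisjoint fun i ↦ Ico (l i) (r i + g) := by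
    intro i hi j hj hij
    rcases le_total (l i) (l j) with h | h
    · exact hdisj_of_le i hi j hj hij h
    · exact (hdisj_of_le j hj i hi hij.symm h).symm
  have hvol : ∑ i ∈ T, volume (Ico (l i) (r i + g)) ≤ volume (Ico a (B + g)) := by
    rw [← measure_biUnion_finset hdisj fun i _ ↦ measurableSet_Ico]
    exact measure_mono <| iUnion₂_subset fun i hi ↦
      Ico_subset_Ico (hal i hi) (by linarith [hrB i hi])
  simp only [Real.volume_Ico] at hvol
  rw [← ENNReal.ofReal_sum_of_nonneg fun i hi ↦ by linarith [hlr i hi],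
    ENNReal.ofReal_le_ofReal_iff (by linarith [hlr i₀ hi₀, hal i₀ hi₀, hrB i₀ hi₀])] at hvol
  have : ∑ i ∈ T, (r i + g - l i) = ∑ i ∈ T, (r i - l i) + #T * g := by
    rw [← nsmul_eq_mul, ← sum_const, ← sum_add_distrib]; congr! 1 with i; ring
  linarith

theorem card_sub_one_mul_rpow_le_volume {I : Set ℝ} (hI : I.OrdConnected)
    (hbdd : Bornology.IsBounded I) {q s : ℝ} (hq : 0 ≤ q) (hs : 0 ≤ s)
    (hlr : ∀ i, l i ≤ r i) (hsub : ∀ i, Icc (l i) (r i) ⊆ I)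
    (hdisj : ∀ i j, i ≠ j → Disjoint (Icc (l i) (r i)) (Icc (l j) (r j)))
    (hsep : ∀ i j, i ≠ j → ∀ x ∈ Icc (l i) (r i), ∀ y ∈ Icc (l j) (r j),
      min (r i - l i) (r j - l j) ^ q ≤ |x - y|)
    {T : Finset ι} (hT : T.Nonempty) (hTs : ∀ i ∈ T, s ≤ r i - l i) :
    ((#T : ℝ) - 1) * s ^ q ≤ (volume I).toReal := by
  have hsepT : ∀ i ∈ T, ∀ j ∈ T, i ≠ j → l i ≤ l j → r i + s ^ q ≤ l j := by
    intro i hi j hj hij hl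
    have hrl := lt_of_disjoint_Icc (hdisj i j hij) hl (hlr j)
    have hgap := hsep i j hij (r i) ⟨hlr i, le_rfl⟩ (l j) ⟨le_rfl, hlr j⟩
    rw [abs_of_neg (by linarith), neg_sub] at hgap
    have : s ^ q ≤ min (r i - l i) (r j - l j) ^ q :=
      Real.rpow_le_rpow hs (le_min (hTs i hi) (hTs j hj)) hq
    linarith
  have hpack := sum_sub_add_card_sub_one_mul_le_volume hI hbdd hT (fun i _ ↦ hlr i)
    (fun i _ ↦ hsub i) (Real.rpow_nonneg hs q) hsepT
  have : 0 ≤ ∑ i ∈ T, (r i - l i) := sum_nonneg fun i _ ↦ sub_nonneg.2 (hlr i)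
  linarith

variable [Fintype ι]

theorem add_one_le_of_one_le_volume_connectedComponentIn {I : Set ℝ} (hI : I.OrdConnected)
    (hlr : ∀ i, l i ≤ r i) (hsub : ∀ i, Icc (l i) (r i) ⊆ I)
    (hdisj : ∀ i j, i ≠ j → Disjoint (Icc (l i) (r i)) (Icc (l j) (r j)))
    (hcomp : ∀ x ∈ I \ ⋃ i, Icc (l i) (r i),
      1 ≤ (volume (connectedComponentIn (I \ ⋃ i, Icc (l i) (r i)) x)).toReal)
    {i j : ι} (hij : i ≠ j) (hl : l i ≤ l j) : r i + 1 ≤ l j := by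
  classical
  have hrl : r i < l j := lt_of_disjoint_Icc (hdisj i j hij) hl (hlr j)
  -- `k` is the right neighbour of `i`, so no interval meets the gap `(r i, l k)`
  obtain ⟨k, hk, hmin⟩ := ({k | r i < l k} : Finset ι).exists_min_image l ⟨j, by simpa⟩
  simp only [Finset.mem_filter, Finset.mem_univ, true_and] at hk hmin
  set x := (r i + l k) / 2
  have hx : x ∈ Ioo (r i) (l k) := ⟨left_lt_add_div_two.mpr hk, add_div_two_lt_right.mpr hk⟩
  have hxU : x ∈ I \ ⋃ i, Icc (l i) (r i) := by
    refine ⟨hI.out (hsub i ⟨hlr i, le_rfl⟩) (hsub k ⟨le_rfl, hlr k⟩) ⟨hx.1.le, hx.2.le⟩, ?_⟩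
    simp only [mem_iUnion, not_exists]
    rintro k' ⟨h1, h2⟩
    by_cases hk' : r i < l k'
    · linarith [hmin k' hk', hx.2]
    · obtain rfl | hne := eq_or_ne k' i
      · linarith [hx.1]
      · exact Set.disjoint_left.mp (hdisj k' i hne) ⟨not_lt.mp hk', by linarith [hx.1]⟩
          ⟨hlr i, le_rfl⟩
  have hri : r i ∉ I \ ⋃ i, Icc (l i) (r i) := fun h ↦ h.2 (mem_iUnion.mpr ⟨i, hlr i, le_rfl⟩)
  have hlk : l k ∉ I \ ⋃ i, Icc (l i) (r i) := fun h ↦ h.2 (mem_iUnion.mpr ⟨k, le_rfl, hlr k⟩)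
  have hC := connectedComponentIn_subset_Ioo hx hri hlk
  calc r i + 1 ≤ r i + (volume (Ioo (r i) (l k))).toReal := by
        gcongr
        exact (hcomp x hxU).trans (ENNReal.toReal_mono (by simp) (measure_mono hC))
    _ = l k := by simp [Real.volume_Ioo, hk.le]
    _ ≤ l j := hmin j hrl

end Intervals

theorem le_rpow_inv_mul_rpow_neg_of_antitone {I : Set ℝ} (hI : I.OrdConnected)
    (hbdd : Bornology.IsBounded I) {N : ℕ} {l r : Fin (N + 1) → ℝ} {q : ℝ} (hq : 0 < q)
    (hlr : ∀ i, l i ≤ r i) (hsub : ∀ i, Icc (l i) (r i) ⊆ I)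
    (hdisj : ∀ i j, i ≠ j → Disjoint (Icc (l i) (r i)) (Icc (l j) (r j)))
    (hsep : ∀ i j, i ≠ j → ∀ x ∈ Icc (l i) (r i), ∀ y ∈ Icc (l j) (r j),
      min (r i - l i) (r j - l j) ^ q ≤ |x - y|)
    {σ : Equiv.Perm (Fin (N + 1))} (hσ : Antitone ((fun i ↦ r i - l i) ∘ σ)) (k : Fin N) :
    r (σ k.succ) - l (σ k.succ) ≤ (volume I).toReal ^ q⁻¹ * ((k : ℝ) + 1) ^ (-q⁻¹) := by
  set s := r (σ k.succ) - l (σ k.succ)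
  have hs : 0 ≤ s := sub_nonneg.2 (hlr _)
  have hcard : #((Finset.Iic k.succ).image σ) = k + 2 := by
    rw [card_image_of_injective _ σ.injective, Fin.card_Iic, Fin.val_succ]
  have hbound := card_sub_one_mul_rpow_le_volume hI hbdd hq.le hs hlr hsub hdisj hsep
    (T := (Finset.Iic k.succ).image σ) ⟨σ k.succ, mem_image_of_mem σ (Finset.mem_Iic.mpr le_rfl)⟩
    (by
      rintro _ hi
      obtain ⟨u, hu, rfl⟩ := mem_image.mp hi
      exact hσ (Finset.mem_Iic.mp hu))
  rw [hcard] at hbound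
  push_cast at hbound
  have hk : (0 : ℝ) < k + 1 := by positivity
  have hsq : s ^ q ≤ (volume I).toReal / (k + 1) := by
    rw [le_div_iff₀ hk]; linarith
  calc s = (s ^ q) ^ q⁻¹ := (Real.rpow_rpow_inv hs hq.ne').symm
    _ ≤ ((volume I).toReal / (k + 1)) ^ q⁻¹ := by gcongr
    _ = (volume I).toReal ^ q⁻¹ * ((k : ℝ) + 1) ^ (-q⁻¹) := by
      rw [Real.div_rpow ENNReal.toReal_nonneg hk.le, Real.rpow_neg hk.le, div_eq_mul_inv]

theorem exists_sum_le_add_rpow_of_separated {I : Set ℝ} (hI : I.OrdConnected)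
    (hbdd : Bornology.IsBounded I) {N : ℕ} {l r : Fin (N + 1) → ℝ} {q : ℝ} (hq : 1 < q)
    (hlr : ∀ i, l i ≤ r i) (hsub : ∀ i, Icc (l i) (r i) ⊆ I)
    (hdisj : ∀ i j, i ≠ j → Disjoint (Icc (l i) (r i)) (Icc (l j) (r j)))
    (hsep : ∀ i j, i ≠ j → ∀ x ∈ Icc (l i) (r i), ∀ y ∈ Icc (l j) (r j),
      min (r i - l i) (r j - l j) ^ q ≤ |x - y|) :
    ∃ i₀, ∑ i, (r i - l i) ≤
      (r i₀ - l i₀) + (volume I).toReal ^ q⁻¹ * (N : ℝ) ^ (1 - q⁻¹) / (1 - q⁻¹) := by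
  set σ := Tuple.sort (fun i ↦ r i - l i) * Fin.revPerm
  have hσ : Antitone ((fun i ↦ r i - l i) ∘ σ) :=
    (Tuple.monotone_sort (fun i ↦ r i - l i)).comp_antitone Fin.rev_anti
  refine ⟨σ 0, ?_⟩
  rw [← Equiv.sum_comp σ, Fin.sum_univ_succ, add_le_add_iff_left, mul_div_assoc]
  calc ∑ k : Fin N, (r (σ k.succ) - l (σ k.succ))
      ≤ ∑ k : Fin N, (volume I).toReal ^ q⁻¹ * ((k : ℝ) + 1) ^ (-q⁻¹) := sum_le_sum fun k _ ↦
        le_rpow_inv_mul_rpow_neg_of_antitone hI hbdd (by linarith) hlr hsub hdisj hsep hσ k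
    _ = (volume I).toReal ^ q⁻¹ * ∑ j ∈ range N, ((j : ℝ) + 1) ^ (-q⁻¹) := by
        rw [← mul_sum, Fin.sum_univ_eq_sum_range (fun j ↦ ((j : ℝ) + 1) ^ (-q⁻¹))]
    _ ≤ (volume I).toReal ^ q⁻¹ * ((N : ℝ) ^ (1 - q⁻¹) / (1 - q⁻¹)) := by
        gcongr
        exact sum_range_add_one_rpow_neg_le (by positivity) (inv_lt_one_of_one_lt₀ hq) N

/-- **Solovay's Lemma.** For every `b > 0` there exists `θ ∈ (0,1)` such that for every
bounded interval `I ⊆ ℝ` and every finite collection of pairwise disjoint closed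
subintervals `J i = [l i, r i]` of `I` satisfying the separation condition
`dist(J', J'') ≥ min(|J'|, |J''|)^(1+b)`, whose total length exceeds `(1-θ)|I|`, and such
that every connected component of `I \ ⋃ J i` has length at least `1`, some interval `J i`
has length at least `(3/4)|I|`. -/
theorem solovay_lemma (b : ℝ) (hb : 0 < b) :
    ∃ θ : ℝ, θ ∈ Set.Ioo (0 : ℝ) 1 ∧
      ∀ (I : Set ℝ), Bornology.IsBounded I → I.OrdConnected →
      ∀ (n : ℕ) (l r : Fin n → ℝ),
        (∀ i, l i ≤ r i) →
        (∀ i, Set.Icc (l i) (r i) ⊆ I) →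
        (∀ i j, i ≠ j → Disjoint (Set.Icc (l i) (r i)) (Set.Icc (l j) (r j))) →
        (∀ i j, i ≠ j → ∀ x ∈ Set.Icc (l i) (r i), ∀ y ∈ Set.Icc (l j) (r j),
          min (r i - l i) (r j - l j) ^ (1 + b) ≤ |x - y|) →
        ((1 - θ) * (volume I).toReal < ∑ i, (r i - l i)) →
        (∀ x ∈ I \ ⋃ i, Set.Icc (l i) (r i),
          1 ≤ (volume (connectedComponentIn (I \ ⋃ i, Set.Icc (l i) (r i)) x)).toReal) →
        ∃ i, 3 / 4 * (volume I).toReal ≤ r i - l i := by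
  set α := (1 + b)⁻¹
  have hα0 : 0 < α := by positivity
  have hp : 0 < 1 - α := sub_pos.2 (inv_lt_one_of_one_lt₀ (by linarith))
  obtain ⟨θ, hθ0, hθc, hθp⟩ :=
    exists_pos_le_rpow_eq (c := (1 - α) / 8) (by positivity) (by linarith) hp (by linarith)
  refine ⟨θ, ⟨hθ0, by linarith⟩, ?_⟩
  intro I hbdd hI n l r hlr hsub hdisj hsep hsum hcomp
  set m := (volume I).toReal
  have hm : 0 ≤ m := ENNReal.toReal_nonneg
  by_contra! hlong
  obtain _ | N := n
  · simp only [univ_eq_empty, sum_empty] at hsum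
    nlinarith
  have hN : (N : ℝ) ≤ θ * m := by
    have := sum_sub_add_card_sub_one_mul_le_volume hI hbdd univ_nonempty (fun i _ ↦ hlr i)
      (fun i _ ↦ hsub i) zero_le_one fun i _ j _ hij ↦
        add_one_le_of_one_le_volume_connectedComponentIn hI hlr hsub hdisj hcomp hij
    simp only [card_univ, Fintype.card_fin, Nat.cast_add, Nat.cast_one] at this
    linarith
  obtain ⟨i₀, hi₀⟩ : ∃ i₀, ∑ i, (r i - l i) ≤
      (r i₀ - l i₀) + m ^ α * (N : ℝ) ^ (1 - α) / (1 - α) :=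
    exists_sum_le_add_rpow_of_separated hI hbdd (by linarith) hlr hsub hdisj hsep
  have htail := rpow_mul_rpow_le_of_le_mul (α := α) hm hθ0.le (by linarith) N.cast_nonneg hN
  rw [hθp] at htail
  have : m ^ α * (N : ℝ) ^ (1 - α) / (1 - α) ≤ m / 8 := by
    rw [div_le_iff₀ hp]; linarith
  nlinarith [hlong i₀]
end

section
/- Let η ∈ (0,1), ε ∈ (0, 1/10), C > 0, let I, D be positive integers, and let d₁, …, d_I be positive integers. There exists a constant κ > 0, depending only on η, C, I, D and d₁, …, d_I, such that the following holds. Let a, ū, u ∈ ℝ with |a| + |ū| + |u| ≤ ε, and for each 1 ≤ ι ≤ I let c_{0,ι}, …, c_{d_ι,ι} ∈ ℝ. Define the polynomials r_{𝔪_ι}(s) = Σ_{k=0}^{d_ι} c_{k,ι} (−1)^k s^k / k! and r_𝔰(s) = ū s² + s(1 − e^a). Suppose there are h ≤ D intervals J₁ = [0, s̄₁], …, J_h = [s_h, s̄_h] with s̄_h = L ≥ 1, which are b-close for some b < η / (2 D · max_ι d_ι), such that for all s ∈ ⋃_{j=1}^h J_j one has |r_{𝔪_ι}(s)| ≤ ε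 for every ι and |r_𝔰(s)| ≤ max(ε, C s^{1−η}). Then |a| ≤ κ L^{−η/2}, |ū| ≤ κ L^{−1−η/2}, and |c_{j,ι}| ≤ κ ε L^{−j + η/2} for every ι and every 0 ≤ j ≤ d_ι. -/
/-!
Closeness forces one interval to be long: each left endpoint is at most `(1 + L^b)` times the
previous right endpoint, so `L ≤ (2 L^b)^D · D · max_j |J_j|` and some `J_j` has length at least
`L^{1-Db} / (2^D D)`. Lagrange interpolation at equally spaced nodes shows that a polynomial of
degree `n` bounded by `M` on an interval of length `δ` inside `[0, L]` has `k`-th coefficient at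
most `(n + 1) 2^n (n/δ)^n M L^{n-k}`; since `n D b < η/2`, this bounds the `c_{k,ι}`.

Closeness also provides a point `x ∈ [L^{1-b}/4, L/2]` of the union. The linear function
`r_𝔰(t)/t = ū t + (1 - e^a)` is at most `4 (ε + |C|) L^{-η/2}` in absolute value at `t = x` and
at `t = L`, which are `L/2` apart; this bounds its slope `ū` and its constant term, and
`|a| ≤ 2 |e^a - 1|` for `|a| ≤ 1/2`.
-/

open Polynomial Finset Real

theorem abs_coeff_prod_X_sub_C_le {ι : Type*} (t : Finset ι) (r : ι → ℝ) {R : ℝ} (hR : 0 ≤ R)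
    (hr : ∀ j ∈ t, |r j| ≤ R) (k : ℕ) :
    |(∏ j ∈ t, (X - C (r j))).coeff k| ≤ 2 ^ #t * R ^ (#t - k) := by
  classical
  induction t using Finset.induction_on generalizing k with
  | empty => rcases k with _ | k <;> simp [coeff_one]
  | insert i t hi ih =>
    have ih := ih fun j hj => hr j (mem_insert_of_mem hj)
    have hri := hr i (mem_insert_self i t)
    rw [prod_insert hi, card_insert_of_notMem hi]
    set Q := ∏ j ∈ t, (X - C (r j))
    have hQ : Q.natDegree ≤ #t := (natDegree_prod_le _ _).trans (by simp)
    rcases k with _ | k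
    · calc |((X - C (r i)) * Q).coeff 0| = |r i| * |Q.coeff 0| := by
            simp [mul_coeff_zero, abs_mul]
        _ ≤ R * (2 ^ #t * R ^ #t) := mul_le_mul hri (ih 0) (abs_nonneg _) hR
        _ ≤ 2 ^ (#t + 1) * R ^ (#t + 1 - 0) := by
            have h2R : 0 ≤ 2 ^ #t * R ^ #t * R := by positivity
            rw [Nat.sub_zero, pow_succ, pow_succ]; nlinarith
    · have hlow : |r i * Q.coeff (k + 1)| ≤ 2 ^ #t * R ^ (#t - k) := by
        rcases lt_or_ge k #t with hk | hk
        · calc |r i * Q.coeff (k + 1)| ≤ R * (2 ^ #t * R ^ (#t - (k + 1))) := by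
                rw [abs_mul]; exact mul_le_mul hri (ih _) (abs_nonneg _) hR
            _ = 2 ^ #t * R ^ (#t - k) := by
                rw [show #t - k = #t - (k + 1) + 1 by omega, pow_succ]; ring
        · rw [coeff_eq_zero_of_natDegree_lt (by omega), mul_zero, abs_zero]; positivity
      calc |((X - C (r i)) * Q).coeff (k + 1)| ≤ |Q.coeff k| + |r i * Q.coeff (k + 1)| := by
            rw [coeff_X_sub_C_mul]; exact abs_sub _ _
        _ ≤ 2 ^ #t * R ^ (#t - k) + 2 ^ #t * R ^ (#t - k) := add_le_add (ih k) hlow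
        _ = 2 ^ (#t + 1) * R ^ (#t + 1 - (k + 1)) := by
            rw [Nat.add_sub_add_right, pow_succ]; ring

theorem abs_coeff_lagrange_basis_le {ι : Type*} [DecidableEq ι] (s : Finset ι) (v : ι → ℝ)
    (i : ι) {R W : ℝ} (hR : 0 ≤ R) (hv : ∀ j ∈ s, |v j| ≤ R)
    (hW : ∀ j ∈ s.erase i, |(v i - v j)⁻¹| ≤ W) (k : ℕ) :
    |(Lagrange.basis s v i).coeff k|
      ≤ W ^ #(s.erase i) * (2 ^ #(s.erase i) * R ^ (#(s.erase i) - k)) := by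
  have hprod : Lagrange.basis s v i
      = C (∏ j ∈ s.erase i, (v i - v j)⁻¹) * ∏ j ∈ s.erase i, (X - C (v j)) := by
    rw [Lagrange.basis, map_prod, ← prod_mul_distrib]
    rfl
  have hinv : |∏ j ∈ s.erase i, (v i - v j)⁻¹| ≤ W ^ #(s.erase i) := by
    rw [abs_prod, ← prod_const]
    exact prod_le_prod (fun _ _ => abs_nonneg _) hW
  rw [hprod, coeff_C_mul, abs_mul]
  exact mul_le_mul hinv
    (abs_coeff_prod_X_sub_C_le _ _ hR (fun j hj => hv j (mem_of_mem_erase hj)) k)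
    (abs_nonneg _) ((abs_nonneg _).trans hinv)

theorem abs_coeff_le_of_abs_eval_le_nodes {ι : Type*} [DecidableEq ι] {s : Finset ι}
    {v : ι → ℝ} (hvs : Set.InjOn v s) {p : ℝ[X]} (hp : p.degree < #s) {M R W : ℝ} (hR : 0 ≤ R)
    (hv : ∀ j ∈ s, |v j| ≤ R) (hW : ∀ i ∈ s, ∀ j ∈ s, i ≠ j → |(v i - v j)⁻¹| ≤ W)
    (hM : ∀ i ∈ s, |p.eval (v i)| ≤ M) (k : ℕ) :
    |p.coeff k| ≤ #s * (M * (W ^ (#s - 1) * (2 ^ (#s - 1) * R ^ (#s - 1 - k)))) := by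
  rw [Lagrange.eq_interpolate hvs hp, Lagrange.interpolate_apply, finsetSum_coeff]
  refine (abs_sum_le_sum_abs _ _).trans ?_
  rw [← nsmul_eq_mul, ← sum_const]
  refine sum_le_sum fun i hi => ?_
  have hbasis := abs_coeff_lagrange_basis_le s v i hR hv
    (fun j hj => hW i hi j (mem_of_mem_erase hj) (ne_of_mem_erase hj).symm) k
  rw [card_erase_of_mem hi] at hbasis
  rw [coeff_C_mul, abs_mul]
  exact mul_le_mul (hM i hi) hbasis (abs_nonneg _) ((abs_nonneg _).trans (hM i hi))

theorem one_le_abs_natCast_sub_natCast {i j : ℕ} (hij : i ≠ j) : 1 ≤ |(i : ℝ) - j| := by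
  rcases lt_or_gt_of_ne hij with h | h
  · have : (i : ℝ) + 1 ≤ j := by exact_mod_cast h
    rw [abs_sub_comm, le_abs]; left; linarith
  · have : (j : ℝ) + 1 ≤ i := by exact_mod_cast h
    rw [le_abs]; left; linarith

theorem abs_coeff_le_of_abs_eval_le_Icc {p : ℝ[X]} {n : ℕ} (hp : p.natDegree ≤ n)
    {α δ R M : ℝ} (hδ : 0 < δ) (hα : -R ≤ α) (hαδ : α + δ ≤ R)
    (hM : ∀ x ∈ Set.Icc α (α + δ), |p.eval x| ≤ M) (k : ℕ) :
    |p.coeff k| ≤ (n + 1) * (M * ((n / δ) ^ n * (2 ^ n * R ^ (n - k)))) := by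
  -- equally spaced nodes; for `n = 0` the junk value `δ / 0 = 0` leaves the single node `α`
  set v : Fin (n + 1) → ℝ := fun i => α + i * (δ / n) with hv
  have hv_sub : ∀ i j, v i - v j = ((i : ℕ) - (j : ℕ) : ℝ) * (δ / n) := fun i j => by
    simp only [hv]; ring
  have hv_mem : ∀ i, v i ∈ Set.Icc α (α + δ) := by
    intro i
    have hstep : (i : ℝ) * (δ / n) ≤ δ := by
      rcases Nat.eq_zero_or_pos n with rfl | hn
      · simpa using hδ.le
      · calc (i : ℝ) * (δ / n) ≤ n * (δ / n) :=
              mul_le_mul_of_nonneg_right (by exact_mod_cast i.is_le) (by positivity)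
          _ = δ := by field_simp
    constructor <;> simp only [hv] <;> nlinarith [show (0 : ℝ) ≤ i * (δ / n) by positivity]
  have hW : ∀ i ∈ univ, ∀ j ∈ univ, i ≠ j → |(v i - v j)⁻¹| ≤ n / δ := by
    intro i _ j _ hij
    have h1 := one_le_abs_natCast_sub_natCast (Fin.val_ne_of_ne hij)
    rw [hv_sub, mul_inv, abs_mul, inv_div, abs_of_nonneg (by positivity : (0 : ℝ) ≤ n / δ)]
    exact mul_le_of_le_one_left (by positivity)
      (by rw [abs_inv]; exact inv_le_one_of_one_le₀ h1)
  have hinj : Set.InjOn v (univ : Finset (Fin (n + 1))) := by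
    intro i _ j _ hij
    rcases Nat.eq_zero_or_pos n with rfl | hn
    · exact Subsingleton.elim (α := Fin 1) i j
    · have h0 := hv_sub i j
      rw [hij, sub_self, eq_comm, mul_eq_zero, sub_eq_zero] at h0
      exact Fin.ext (by exact_mod_cast h0.resolve_right (by positivity))
  have hR : 0 ≤ R := by linarith
  have hdeg : p.degree < #(univ : Finset (Fin (n + 1))) := by
    rw [card_univ, Fintype.card_fin]
    exact degree_le_natDegree.trans_lt (by exact_mod_cast Nat.lt_succ_of_le hp)
  have := abs_coeff_le_of_abs_eval_le_nodes hinj hdeg hR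
    (fun j _ => abs_le.mpr ⟨by linarith [(hv_mem j).1], by linarith [(hv_mem j).2]⟩) hW
    (fun i _ => hM _ (hv_mem i)) k
  simpa using this

theorem abs_le_of_abs_sum_le_on_long_Icc {n : ℕ} (a : Fin (n + 1) → ℝ) {α β L K θ M : ℝ}
    (hα : 0 ≤ α) (hβ : β ≤ L) (hL : 0 < L) (hK : 0 < K) (hlong : L ^ (1 - θ) / K ≤ β - α)
    (hM : ∀ x ∈ Set.Icc α β, |∑ m, a m * x ^ (m : ℕ)| ≤ M) (k : Fin (n + 1)) :
    |a k| ≤ (n + 1) * 2 ^ n * (n * K) ^ n * M * L ^ (n * θ - (k : ℕ)) := by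
  classical
  have hδ : 0 < β - α := (by positivity : 0 < L ^ (1 - θ) / K).trans_le hlong
  have hM0 : 0 ≤ M := (abs_nonneg _).trans (hM α ⟨le_rfl, by linarith⟩)
  have hcoeff := abs_coeff_le_of_abs_eval_le_Icc (p := ofFn (n + 1) a)
    (Nat.lt_succ_iff.mp (ofFn_natDegree_lt (by omega) a)) hδ (α := α) (R := L) (by linarith)
    (by linarith) (fun x hx => by
      simpa [ofFn_eq_sum_monomial, eval_finsetSum] using hM x (by simpa using hx)) k
  rw [ofFn_coeff_eq_val_of_lt _ k.is_lt] at hcoeff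
  have hinv : (n / (β - α) : ℝ) ≤ n * K * L ^ (θ - 1) := by
    have h1 : 1 ≤ K * (β - α) * L ^ (θ - 1) := by
      calc (1 : ℝ) = L ^ (1 - θ) * L ^ (θ - 1) := by
            rw [← rpow_add hL]; norm_num
        _ ≤ K * (β - α) * L ^ (θ - 1) := by
            gcongr; rwa [div_le_iff₀ hK, mul_comm] at hlong
    rw [div_le_iff₀ hδ]
    nlinarith [(Nat.cast_nonneg n : (0 : ℝ) ≤ n)]
  have hpow :
      (n / (β - α) : ℝ) ^ n * L ^ (n - (k : ℕ)) ≤ (n * K) ^ n * L ^ (n * θ - (k : ℕ)) := by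
    calc (n / (β - α) : ℝ) ^ n * L ^ (n - (k : ℕ))
        ≤ (n * K * L ^ (θ - 1)) ^ n * L ^ (n - (k : ℕ)) := by gcongr
      _ = (n * K) ^ n * L ^ (n * θ - (k : ℕ)) := by
        rw [mul_pow, ← rpow_natCast (L ^ (θ - 1)), ← rpow_mul hL.le,
          ← rpow_natCast L, Nat.cast_sub k.is_le, mul_assoc, ← rpow_add hL]
        ring_nf
  calc |a k| ≤ (n + 1) * (M * ((n / (β - α)) ^ n * (2 ^ n * L ^ (n - (k : ℕ))))) := hcoeff
    _ = (n + 1) * 2 ^ n * M * ((n / (β - α)) ^ n * L ^ (n - (k : ℕ))) := by ring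
    _ ≤ (n + 1) * 2 ^ n * M * ((n * K) ^ n * L ^ (n * θ - (k : ℕ))) := by gcongr
    _ = (n + 1) * 2 ^ n * (n * K) ^ n * M * L ^ (n * θ - (k : ℕ)) := by ring

/-- The paper's intervals `J_{j+1} = [s_{j+1}, s̄_{j+1}]` are `[s j, s' j]`, `j < h`. -/
structure IsBClose (h : ℕ) (s s' : ℕ → ℝ) (b : ℝ) : Prop where
  nonneg : 0 ≤ s 0
  le : ∀ j < h, s j ≤ s' j
  lt : ∀ j, j + 1 < h → s' j < s (j + 1)
  gap_le : ∀ j, j + 1 < h → s (j + 1) - s' j ≤ s' j ^ (1 + b)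

namespace IsBClose

variable {h : ℕ} {s s' : ℕ → ℝ} {b L : ℝ}

theorem nonneg_left (hc : IsBClose h s s' b) : ∀ j < h, 0 ≤ s j
  | 0, _ => hc.nonneg
  | j + 1, hj => by
    linarith [hc.nonneg_left j (by omega), hc.le j (by omega), hc.lt j hj]

theorem nonneg_right (hc : IsBClose h s s' b) {j : ℕ} (hj : j < h) : 0 ≤ s' j :=
  (hc.nonneg_left j hj).trans (hc.le j hj)

theorem right_mono (hc : IsBClose h s s' b) {j k : ℕ} (hjk : j ≤ k) (hk : k < h) :
    s' j ≤ s' k := by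
  induction k, hjk using Nat.le_induction with
  | base => exact le_rfl
  | succ k _ ih => linarith [hc.lt k hk, hc.le (k + 1) hk, ih (by omega)]

theorem right_le_last (hc : IsBClose h s s' b) {j : ℕ} (hj : j < h) : s' j ≤ s' (h - 1) :=
  hc.right_mono (by omega) (by omega)

theorem left_succ_le (hc : IsBClose h s s' b) (hb : 0 ≤ b) (hL : s' (h - 1) ≤ L) {j : ℕ}
    (hj : j + 1 < h) : s (j + 1) ≤ s' j * (1 + L ^ b) := by
  have h0 := hc.nonneg_right (j := j) (by omega)
  have hpow : s' j ^ (1 + b) ≤ s' j * L ^ b := by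
    rw [rpow_add' h0 (by positivity), rpow_one]
    exact mul_le_mul_of_nonneg_left
      (rpow_le_rpow h0 ((hc.right_le_last (by omega)).trans hL) hb) h0
  linarith [hc.gap_le j hj]

theorem right_le_pow_mul_sum (hc : IsBClose h s s' b) (hs0 : s 0 = 0) (hb : 0 ≤ b)
    (hL : s' (h - 1) ≤ L) :
    ∀ j < h, s' j ≤ (1 + L ^ b) ^ j * ∑ i ∈ range (j + 1), (s' i - s i)
  | 0, _ => by simp [hs0]
  | j + 1, hj => by
    have ih := hc.right_le_pow_mul_sum hs0 hb hL j (by omega)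
    have hq : 1 ≤ 1 + L ^ b := by
      linarith [rpow_nonneg ((hc.nonneg_right (by omega)).trans hL) b]
    have hlen : s' (j + 1) - s (j + 1) ≤ (1 + L ^ b) ^ (j + 1) * (s' (j + 1) - s (j + 1)) :=
      le_mul_of_one_le_left (by linarith [hc.le (j + 1) hj]) (one_le_pow₀ hq)
    calc s' (j + 1) = s (j + 1) + (s' (j + 1) - s (j + 1)) := by ring
      _ ≤ s' j * (1 + L ^ b) + (s' (j + 1) - s (j + 1)) := by
        linarith [hc.left_succ_le hb hL hj]
      _ ≤ (1 + L ^ b) ^ (j + 1) * ∑ i ∈ range (j + 1), (s' i - s i)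
          + (1 + L ^ b) ^ (j + 1) * (s' (j + 1) - s (j + 1)) := by
        rw [pow_succ] at hlen ⊢
        linarith [mul_le_mul_of_nonneg_right ih (by linarith : (0:ℝ) ≤ 1 + L ^ b)]
      _ = (1 + L ^ b) ^ (j + 1) * ∑ i ∈ range (j + 1 + 1), (s' i - s i) := by
        rw [sum_range_succ _ (j + 1), mul_add]

theorem exists_long (hc : IsBClose h s s' b) (hs0 : s 0 = 0) (hb : 0 ≤ b) {D : ℕ} (hh : 1 ≤ h)
    (hhD : h ≤ D) (hL : s' (h - 1) = L) (hL1 : 1 ≤ L) :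
    ∃ j < h, L ^ (1 - D * b) / (2 ^ D * D) ≤ s' j - s j := by
  obtain ⟨j, hj, hmax⟩ :=
    exists_max_image (range h) (fun i => s' i - s i) ⟨0, mem_range.mpr hh⟩
  have hj := mem_range.mp hj
  refine ⟨j, hj, ?_⟩
  have hL0 : 0 < L := by linarith
  have hD : (1 : ℝ) ≤ D := by exact_mod_cast hh.trans hhD
  have hLb : 1 ≤ L ^ b := one_le_rpow hL1 hb
  have hsum : ∑ i ∈ range h, (s' i - s i) ≤ D * (s' j - s j) := by
    calc ∑ i ∈ range h, (s' i - s i) ≤ ∑ _i ∈ range h, (s' j - s j) := sum_le_sum hmax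
      _ = h * (s' j - s j) := by rw [sum_const, card_range, nsmul_eq_mul]
      _ ≤ D * (s' j - s j) := by
        gcongr
        linarith [hc.le j hj]
  have hpow : (1 + L ^ b) ^ (h - 1) ≤ (2 * L ^ b) ^ D :=
    (pow_le_pow_left₀ (by positivity) (by linarith) _).trans
      (pow_le_pow_right₀ (by linarith) (by omega))
  have hlen : L ≤ (2 * L ^ b) ^ D * (D * (s' j - s j)) := by
    calc L = s' (h - 1) := hL.symm
      _ ≤ (1 + L ^ b) ^ (h - 1) * ∑ i ∈ range (h - 1 + 1), (s' i - s i) :=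
        hc.right_le_pow_mul_sum hs0 hb hL.le _ (by omega)
      _ ≤ (2 * L ^ b) ^ D * (D * (s' j - s j)) := by
        rw [Nat.sub_add_cancel hh]
        exact mul_le_mul hpow hsum
          (sum_nonneg fun i hi => by linarith [hc.le i (mem_range.mp hi)]) (by positivity)
  have e1 : (2 * L ^ b) ^ D = 2 ^ D * L ^ (D * b) := by
    rw [mul_pow, ← rpow_natCast (L ^ b), ← rpow_mul hL0.le, mul_comm b]
  rw [rpow_sub hL0, rpow_one, div_div, div_le_iff₀ (by positivity)]
  rw [e1] at hlen
  linarith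

theorem exists_mem_Icc_between (hc : IsBClose h s s' b) (hb : 0 ≤ b) (hh : 1 ≤ h)
    (h0 : s 0 ≤ L / 2) (hL : s' (h - 1) = L) (hL1 : 1 ≤ L) :
    ∃ j < h, ∃ x ∈ Set.Icc (s j) (s' j), L ^ (1 - b) / 4 ≤ x ∧ x ≤ L / 2 := by
  have hL0 : 0 < L := by linarith
  have hLb : 1 ≤ L ^ b := one_le_rpow hL1 hb
  rw [rpow_sub hL0, rpow_one]
  set j := Nat.findGreatest (fun j => s j ≤ L / 2) (h - 1)
  have hjh : j < h := by
    have := Nat.findGreatest_le (P := fun j => s j ≤ L / 2) (h - 1); omega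
  have hsj : s j ≤ L / 2 :=
    Nat.findGreatest_spec (P := fun j => s j ≤ L / 2) (Nat.zero_le _) h0
  by_cases hq : L / 4 ≤ s' j
  · refine ⟨j, hjh, max (s j) (L / 4), ⟨le_max_left _ _, max_le (hc.le j hjh) hq⟩, ?_,
      max_le hsj (by linarith)⟩
    calc L / L ^ b / 4 ≤ L / 4 := by gcongr; exact div_le_self hL0.le hLb
      _ ≤ max (s j) (L / 4) := le_max_right _ _
  · rw [not_le] at hq
    have hj1 : j + 1 < h := by
      by_contra hcon
      rw [show j = h - 1 by omega, hL] at hq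
      linarith
    have hnext : L / 2 < s (j + 1) :=
      not_le.mp (Nat.findGreatest_is_greatest (Nat.lt_succ_self j) (by omega))
    have hstep := hc.left_succ_le hb hL.le hj1
    refine ⟨j, hjh, s' j, ⟨hc.le j hjh, le_rfl⟩, ?_, by linarith⟩
    rw [div_div, div_le_iff₀ (by positivity)]
    nlinarith [hc.nonneg_right hjh]

theorem abs_le_of_abs_sum_div_factorial_le (hc : IsBClose h s s' b) (hs0 : s 0 = 0)
    (hb : 0 ≤ b) {D : ℕ} (hh : 1 ≤ h) (hhD : h ≤ D) (hL : s' (h - 1) = L) (hL1 : 1 ≤ L)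
    {n : ℕ} (c : Fin (n + 1) → ℝ) {ε η : ℝ} (hnb : n * (D * b) ≤ η / 2)
    (hε : ∀ j < h, ∀ x ∈ Set.Icc (s j) (s' j),
      |∑ m : Fin (n + 1), c m * (-1) ^ (m : ℕ) * x ^ (m : ℕ) / ((m : ℕ).factorial : ℝ)| ≤ ε)
    (k : Fin (n + 1)) :
    |c k| ≤ n.factorial * (n + 1) * 2 ^ n * (n * (2 ^ D * D)) ^ n * ε
      * L ^ (-((k : ℕ) : ℝ) + η / 2) := by
  obtain ⟨j, hj, hlong⟩ := hc.exists_long hs0 hb hh hhD hL hL1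
  have hε0 : 0 ≤ ε := (abs_nonneg _).trans (hε j hj (s j) ⟨le_rfl, hc.le j hj⟩)
  have hD : (0 : ℝ) < D := by exact_mod_cast (by omega : 0 < D)
  have hcoeff := abs_le_of_abs_sum_le_on_long_Icc
    (fun m => c m * (-1) ^ (m : ℕ) / ((m : ℕ).factorial : ℝ))
    (hc.nonneg_left j hj) (hL ▸ hc.right_le_last hj) (by linarith) (mul_pos (by positivity) hD)
    hlong
    (fun x hx => by simpa only [div_mul_eq_mul_div] using hε j hj x hx) k
  have hfac :
      |c k| = (k : ℕ).factorial * |c k * (-1) ^ (k : ℕ) / ((k : ℕ).factorial : ℝ)| := by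
    rw [abs_div, abs_mul, abs_pow, abs_neg, abs_one, one_pow, mul_one, Nat.abs_cast,
      mul_div_cancel₀ _ (by positivity)]
  rw [hfac]
  calc (k : ℕ).factorial * |c k * (-1) ^ (k : ℕ) / ((k : ℕ).factorial : ℝ)|
      ≤ (k : ℕ).factorial * ((n + 1) * 2 ^ n * (n * (2 ^ D * D)) ^ n * ε
        * L ^ (n * (D * b) - (k : ℕ))) := by gcongr
    _ ≤ n.factorial * ((n + 1) * 2 ^ n * (n * (2 ^ D * D)) ^ n * ε
        * L ^ (-((k : ℕ) : ℝ) + η / 2)) := by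
      gcongr
      · exact k.is_le
      · linarith
    _ = _ := by ring

end IsBClose

theorem abs_le_two_mul_abs_exp_sub_one {a : ℝ} (ha : |a| ≤ 1 / 2) : |a| ≤ 2 * |exp a - 1| := by
  have hquad := abs_exp_sub_one_sub_id_le (ha.trans (by norm_num))
  have htri : |a| ≤ |exp a - 1| + |exp a - 1 - a| := by
    simpa using abs_sub (exp a - 1) (exp a - 1 - a)
  nlinarith [sq_abs a, abs_nonneg a]

theorem abs_slope_and_intercept_le {u v x y A : ℝ} (hy : 0 ≤ y) (hxy : x ≤ y / 2)
    (hAx : |u * x + v| ≤ A) (hAy : |u * y + v| ≤ A) : |u| * y ≤ 4 * A ∧ |v| ≤ 5 * A := by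
  have hslope : |u| * (y - x) ≤ 2 * A := by
    calc |u| * (y - x) = |(u * y + v) - (u * x + v)| := by
          rw [← abs_of_nonneg (by linarith : 0 ≤ y - x), ← abs_mul]; ring_nf
      _ ≤ 2 * A := by linarith [abs_sub (u * y + v) (u * x + v)]
  have huy : |u| * y ≤ 4 * A := by nlinarith [abs_nonneg u]
  refine ⟨huy, ?_⟩
  calc |v| = |(u * y + v) - u * y| := by ring_nf
    _ ≤ |u * y + v| + |u| * y := by
      rw [← abs_of_nonneg hy, ← abs_mul, abs_of_nonneg hy]; exact abs_sub _ _
    _ ≤ 5 * A := by linarith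

theorem add_mul_rpow_le_mul {η ε C L x : ℝ} (hη0 : 0 ≤ η) (hη1 : η ≤ 1) (hε : 0 ≤ ε)
    (hC : 0 ≤ C) (hL : 1 ≤ L) (hx : L ^ (1 / 2 : ℝ) / 4 ≤ x) :
    ε + C * x ^ (1 - η) ≤ 4 * (ε + C) * L ^ (-(η / 2)) * x := by
  have hL0 : 0 < L := by linarith
  have hx0 : 0 < x := (by positivity : (0 : ℝ) < L ^ (1 / 2 : ℝ) / 4).trans_le hx
  have hone : 1 ≤ 4 * L ^ (-(η / 2)) * x := by
    calc (1 : ℝ) ≤ L ^ (-(η / 2)) * L ^ (1 / 2 : ℝ) := by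
          rw [← rpow_add hL0]; exact one_le_rpow hL (by linarith)
      _ ≤ 4 * L ^ (-(η / 2)) * x := by nlinarith [rpow_pos_of_pos hL0 (-(η / 2))]
  have hxη : x ^ (-η) ≤ 4 * L ^ (-(η / 2)) := by
    calc x ^ (-η) ≤ (L ^ (1 / 2 : ℝ) / 4) ^ (-η) :=
          rpow_le_rpow_of_nonpos (by positivity) hx (by linarith)
      _ = L ^ (-(η / 2)) * 4 ^ η := by
          rw [div_rpow (by positivity) (by norm_num), ← rpow_mul hL0.le, rpow_neg (by norm_num),
            div_inv_eq_mul]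
          ring_nf
      _ ≤ L ^ (-(η / 2)) * 4 := by
          gcongr
          simpa using rpow_le_rpow_of_exponent_le (by norm_num : (1 : ℝ) ≤ 4) hη1
      _ = 4 * L ^ (-(η / 2)) := mul_comm _ _
  have hpow : x ^ (1 - η) = x * x ^ (-η) := by
    rw [sub_eq_add_neg, rpow_add hx0, rpow_one]
  rw [hpow]
  nlinarith [mul_le_mul_of_nonneg_left hxη (by positivity : 0 ≤ C * x)]

theorem abs_le_of_abs_quadratic_le {η ε C a u x L : ℝ} (hη0 : 0 ≤ η) (hη1 : η ≤ 1) (hε : 0 ≤ ε)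
    (ha : |a| ≤ 1 / 2) (hL : 1 ≤ L) (hx : L ^ (1 / 2 : ℝ) / 4 ≤ x) (hxL : x ≤ L / 2)
    (hrx : |u * x ^ 2 + x * (1 - exp a)| ≤ max ε (C * x ^ (1 - η)))
    (hrL : |u * L ^ 2 + L * (1 - exp a)| ≤ max ε (C * L ^ (1 - η))) :
    |a| ≤ 40 * (ε + |C|) * L ^ (-(η / 2)) ∧ |u| ≤ 16 * (ε + |C|) * L ^ (-1 - η / 2) := by
  have hL0 : 0 < L := by linarith
  set A := 4 * (ε + |C|) * L ^ (-(η / 2))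
  have hlin : ∀ t, L ^ (1 / 2 : ℝ) / 4 ≤ t →
      |u * t ^ 2 + t * (1 - exp a)| ≤ max ε (C * t ^ (1 - η)) → |u * t + (1 - exp a)| ≤ A := by
    intro t ht hrt
    have ht0 : 0 < t := (by positivity : (0 : ℝ) < L ^ (1 / 2 : ℝ) / 4).trans_le ht
    have hpow := rpow_nonneg ht0.le (1 - η)
    have hmax : max ε (C * t ^ (1 - η)) ≤ ε + |C| * t ^ (1 - η) :=
      max_le (le_add_of_nonneg_right (mul_nonneg (abs_nonneg C) hpow))
        ((mul_le_mul_of_nonneg_right (le_abs_self C) hpow).trans (le_add_of_nonneg_left hε))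
    have hprod : t * |u * t + (1 - exp a)| ≤ t * A := by
      rw [← abs_of_pos ht0, ← abs_mul, abs_of_pos ht0]
      calc |t * (u * t + (1 - exp a))| = |u * t ^ 2 + t * (1 - exp a)| := by ring_nf
        _ ≤ t * A := (hrt.trans hmax).trans
          ((add_mul_rpow_le_mul hη0 hη1 hε (abs_nonneg C) hL ht).trans_eq (by ring))
    exact le_of_mul_le_mul_left hprod ht0
  have hLhalf : L ^ (1 / 2 : ℝ) / 4 ≤ L := by
    have := rpow_le_rpow_of_exponent_le hL (by norm_num : (1 / 2 : ℝ) ≤ 1)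
    rw [rpow_one] at this
    linarith
  obtain ⟨hu, hexp⟩ := abs_slope_and_intercept_le hL0.le hxL
    (hlin x hx hrx) (hlin L hLhalf hrL)
  constructor
  · calc |a| ≤ 2 * |exp a - 1| := abs_le_two_mul_abs_exp_sub_one ha
      _ ≤ 40 * (ε + |C|) * L ^ (-(η / 2)) := by rw [abs_sub_comm]; linarith
  · rw [show -1 - η / 2 = -(η / 2) - 1 by ring, rpow_sub_one hL0.ne', ← mul_div_assoc,
      le_div_iff₀ hL0]
    linarith

theorem one_le_and_mul_lt_of_lt_div {η b : ℝ} {N : ℕ} (hb : 0 < b) (hbN : b < η / (2 * N)) :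
    1 ≤ N ∧ N * b < η / 2 := by
  have hN : N ≠ 0 := by
    rintro rfl
    simp only [Nat.cast_zero, mul_zero, div_zero] at hbN
    linarith
  have hN0 : (0 : ℝ) < N := by exact_mod_cast Nat.pos_of_ne_zero hN
  rw [lt_div_iff₀ (by positivity)] at hbN
  exact ⟨Nat.one_le_iff_ne_zero.mpr hN, by linarith⟩

theorem sublevel_coeff_bounds_general (η ε C : ℝ) (I D : ℕ) (d : Fin I → ℕ)
    (hη : η ∈ Set.Ioo (0 : ℝ) 1) (hε : ε ∈ Set.Ioo (0 : ℝ) (1 / 10)) :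
    ∃ κ : ℝ, 0 < κ ∧
      ∀ (a ub u : ℝ) (c : (ι : Fin I) → Fin (d ι + 1) → ℝ),
        |a| + |ub| + |u| ≤ ε →
        ∀ (h : ℕ) (s s' : ℕ → ℝ) (L b : ℝ),
          1 ≤ h → h ≤ D →
          s 0 = 0 →
          (∀ j < h, s j ≤ s' j) →
          (∀ j, j + 1 < h → s' j < s (j + 1)) →
          s' (h - 1) = L → 1 ≤ L →
          0 < b → b < η / (2 * (D : ℝ) * ((Finset.univ.sup d : ℕ) : ℝ)) →
          (∀ j, j + 1 < h → s (j + 1) - s' j ≤ s' j ^ (1 + b)) →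
          (∀ j < h, ∀ x ∈ Set.Icc (s j) (s' j),
            (∀ ι : Fin I,
              |∑ m : Fin (d ι + 1),
                  c ι m * (-1 : ℝ) ^ (m : ℕ) * x ^ (m : ℕ) / ((m : ℕ).factorial : ℝ)| ≤ ε) ∧
            |ub * x ^ 2 + x * (1 - Real.exp a)| ≤ max ε (C * x ^ (1 - η))) →
          |a| ≤ κ * L ^ (-(η / 2)) ∧
          |ub| ≤ κ * L ^ (-1 - η / 2) ∧
          ∀ (ι : Fin I) (j : Fin (d ι + 1)),
            |c ι j| ≤ κ * ε * L ^ (-((j : ℕ) : ℝ) + η / 2) := by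
  set K : Fin I → ℝ := fun ι =>
    (d ι).factorial * (d ι + 1) * 2 ^ d ι * (d ι * (2 ^ D * D)) ^ d ι
  refine ⟨40 * (1 + |C|) + ∑ ι, K ι, by positivity, ?_⟩
  intro a ub u c hsum h s s' L b hh hhD hs0 hss' hs's hL hL1 hb hbη hclose hbound
  have hc : IsBClose h s s' b := ⟨hs0.ge, hss', hs's, hclose⟩
  obtain ⟨hN, hNb⟩ := one_le_and_mul_lt_of_lt_div (N := D * univ.sup d) hb
    (by rwa [Nat.cast_mul, ← mul_assoc])
  have hdb : ∀ ι, (d ι : ℝ) * (D * b) ≤ η / 2 := fun ι => by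
    have : (d ι : ℝ) ≤ univ.sup d := by exact_mod_cast le_sup (mem_univ ι)
    push_cast at hNb
    linarith [mul_le_mul_of_nonneg_right this (by positivity : (0 : ℝ) ≤ D * b)]
  have hb_le : b ≤ 1 / 2 := by
    have : (1 : ℝ) ≤ (D * univ.sup d : ℕ) := by exact_mod_cast hN
    nlinarith [hη.2]
  have ha_small : |a| ≤ 1 / 2 := by linarith [abs_nonneg ub, abs_nonneg u, hε.2]
  obtain ⟨j, hj, x, hx, hxlow, hxhigh⟩ :=
    hc.exists_mem_Icc_between hb.le hh (by rw [hs0]; linarith) hL hL1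
  have hxlow' : L ^ (1 / 2 : ℝ) / 4 ≤ x :=
    le_trans (by gcongr ?_ / _; exact rpow_le_rpow_of_exponent_le hL1 (by linarith)) hxlow
  obtain ⟨ha, hub⟩ := abs_le_of_abs_quadratic_le hη.1.le hη.2.le hε.1.le ha_small hL1 hxlow' hxhigh
    (hbound j hj x hx).2 (hbound (h - 1) (by omega) L ⟨hL ▸ hc.le _ (by omega), hL.ge⟩).2
  have hκ : 40 * (ε + |C|) ≤ 40 * (1 + |C|) + ∑ ι, K ι := by
    have : 0 ≤ ∑ ι, K ι := sum_nonneg fun ι _ => by positivity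
    linarith [hε.2]
  refine ⟨ha.trans (by gcongr), hub.trans (by gcongr; linarith [abs_nonneg C, hε.1]),
    fun ι k => ?_⟩
  refine (hc.abs_le_of_abs_sum_div_factorial_le hs0 hb.le hh hhD hL hL1 (c ι) (hdb ι)
    (fun j hj x hx => (hbound j hj x hx).1 ι) k).trans ?_
  gcongr
  · exact hε.1.le
  · exact (single_le_sum (f := K) (fun ι _ => by positivity) (mem_univ ι)).trans
      (le_add_of_nonneg_left (by positivity))

/-- Proposition on sub-level sets of the polynomials `r_{𝔪_ι}` and `r_𝔰`: if the polynomials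
`r_{𝔪_ι}(s) = ∑ c_{k,ι} (-1)^k s^k / k!` are bounded by `ε` and
`r_𝔰(s) = ū s² + s(1 - e^a)` is bounded by `max(ε, C s^(1-η))` on `h ≤ D` intervals which are
`b`-close with `b < η / (2 D max_ι d_ι)`, and the last interval ends at `L ≥ 1`, then
`|a| ≤ κ L^(-η/2)`, `|ū| ≤ κ L^(-1-η/2)` and `|c_{j,ι}| ≤ κ ε L^(-j+η/2)`. -/
theorem sublevel_coeff_bounds (η ε C : ℝ) (I D : ℕ) (d : Fin I → ℕ)
    (hη : η ∈ Set.Ioo (0 : ℝ) 1) (hε : ε ∈ Set.Ioo (0 : ℝ) (1 / 10)) (hC : 0 < C)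
    (hI : 0 < I) (hD : 0 < D) (hd : ∀ ι, 0 < d ι) :
    ∃ κ : ℝ, 0 < κ ∧
      ∀ (a ub u : ℝ) (c : (ι : Fin I) → Fin (d ι + 1) → ℝ),
        |a| + |ub| + |u| ≤ ε →
        ∀ (h : ℕ) (s s' : ℕ → ℝ) (L b : ℝ),
          1 ≤ h → h ≤ D →
          s 0 = 0 →
          (∀ j < h, s j ≤ s' j) →
          (∀ j, j + 1 < h → s' j < s (j + 1)) →
          s' (h - 1) = L → 1 ≤ L →
          0 < b → b < η / (2 * (D : ℝ) * ((Finset.univ.sup d : ℕ) : ℝ)) →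
          (∀ j, j + 1 < h → s (j + 1) - s' j ≤ s' j ^ (1 + b)) →
          (∀ j < h, ∀ x ∈ Set.Icc (s j) (s' j),
            (∀ ι : Fin I,
              |∑ m : Fin (d ι + 1),
                  c ι m * (-1 : ℝ) ^ (m : ℕ) * x ^ (m : ℕ) / ((m : ℕ).factorial : ℝ)| ≤ ε) ∧
            |ub * x ^ 2 + x * (1 - Real.exp a)| ≤ max ε (C * x ^ (1 - η))) →
          |a| ≤ κ * L ^ (-(η / 2)) ∧
          |ub| ≤ κ * L ^ (-1 - η / 2) ∧
          ∀ (ι : Fin I) (j : Fin (d ι + 1)),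
            |c ι j| ≤ κ * ε * L ^ (-((j : ℕ) : ℝ) + η / 2) :=
  sublevel_coeff_bounds_general η ε C I D d hη hε
end

section
/- Let (M, μ) be a probability space and φ : ℝ × M → M a jointly measurable measure-preserving flow. Let f : M → ℂ be measurable and bounded with ∫_M f dμ = 0, and let S ≥ sup_M |f|. Suppose there are constants C_M > 0 and η̃ ∈ (0,1) such that |∫_M f(φ^t(x)) · conj(f(x)) dμ(x)| ≤ C_M S² t^{−η̃} for all t ≥ 1. Set η′ = η̃/4. Then there exists a constant C′ > 0, depending only on C_M and η̃, such that for every ω > 0 there exist a measurable set Y ⊆ M with μ(Y) ≥ 1 − ω and a number m′ = m′(ω) ≥ 1 such that for every x ∈ Y and every t ≥ m′ one has |∫₀^t f(φ^s(x)) ds| ≤ C′ S t^{1−η′}. -/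
/-!
Measure preservation makes the correlation of `f ∘ φ s` and `f ∘ φ u` depend only on `s - u`,
so the decay hypothesis, together with the trivial bound `S²` for gaps below `1`, gives
`∫ ‖∫₀ᵗ f (φ s x) ds‖² dμ ≤ K S² t^(2-η̃)` by Fubini, with `K` depending only on `C_M` and `η̃`.
By Chebyshev, the set where `‖∫₀ʳ f (φ s x) ds‖ > S r^(1-η̃/4)` has measure at most
`K r^(-η̃/2)`. Along the times `r = n^q` with `q = 3/η̃` these bounds are `K n^(-3/2)`, which are
summable, so removing the exceptional sets with `n ≥ N` costs measure at most `ω` once `N` is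
large. Between two consecutive sampling times the integral moves by at most
`S ((n+1)^q - n^q) ≲ S t^(1-η̃/4)`.
-/

open MeasureTheory Filter Topology Set
open scoped ENNReal ComplexConjugate

theorem intervalIntegrable_abs_rpow {r : ℝ} (hr : -1 < r) (a b : ℝ) :
    IntervalIntegrable (fun x => |x| ^ r) volume a b := by
  have of_nonneg : ∀ c : ℝ, 0 ≤ c → IntervalIntegrable (fun x => |x| ^ r) volume 0 c :=
    fun c hc => (intervalIntegral.intervalIntegrable_rpow' hr).congr fun x hx => by
      rw [uIoc_of_le hc] at hx
      rw [abs_of_pos hx.1]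
  have from_zero : ∀ c : ℝ, IntervalIntegrable (fun x => |x| ^ r) volume 0 c := by
    intro c
    rcases le_total 0 c with hc | hc
    · exact of_nonneg c hc
    · simpa using (of_nonneg (-c) (neg_nonneg.2 hc)).comp_sub_left 0
  exact (from_zero a).symm.trans (from_zero b)

theorem intervalIntegrable_abs_sub_rpow {r : ℝ} (hr : -1 < r) (s a b : ℝ) :
    IntervalIntegrable (fun u => |s - u| ^ r) volume a b := by
  simpa using (intervalIntegrable_abs_rpow hr (s - a) (s - b)).comp_sub_left s

theorem integral_abs_rpow {r : ℝ} (hr : -1 < r) {a : ℝ} (ha : 0 ≤ a) :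
    ∫ x in (0 : ℝ)..a, |x| ^ r = a ^ (r + 1) / (r + 1) := by
  have habs : EqOn (fun x : ℝ => |x| ^ r) (fun x => x ^ r) (uIcc 0 a) := fun x hx => by
    rw [uIcc_of_le ha] at hx
    simp only [abs_of_nonneg hx.1]
  rw [intervalIntegral.integral_congr habs, integral_rpow (Or.inl hr),
    Real.zero_rpow (by linarith), sub_zero]

theorem integral_abs_sub_rpow_le {r : ℝ} (hr : -1 < r) {s t : ℝ} (hs : s ∈ Icc 0 t) :
    ∫ u in (0 : ℝ)..t, |s - u| ^ r ≤ 2 * t ^ (r + 1) / (r + 1) := by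
  obtain ⟨hs0, hst⟩ := hs
  have left : ∫ u in (0 : ℝ)..s, |s - u| ^ r = s ^ (r + 1) / (r + 1) := by
    rw [intervalIntegral.integral_comp_sub_left (fun x => |x| ^ r), sub_self, sub_zero,
      integral_abs_rpow hr hs0]
  have right : ∫ u in s..t, |s - u| ^ r = (t - s) ^ (r + 1) / (r + 1) := by
    simp_rw [abs_sub_comm s]
    rw [intervalIntegral.integral_comp_sub_right (fun x => |x| ^ r), sub_self,
      integral_abs_rpow hr (sub_nonneg.2 hst)]
  rw [← intervalIntegral.integral_add_adjacent_intervals (intervalIntegrable_abs_sub_rpow hr s 0 s)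
    (intervalIntegrable_abs_sub_rpow hr s s t), left, right, ← add_div, two_mul]
  have hr1 : 0 ≤ r + 1 := by linarith
  gcongr
  all_goals linarith

theorem rpow_add_one_sub_rpow_le {q : ℝ} (hq : 1 ≤ q) {x : ℝ} (hx : 1 ≤ x) :
    (x + 1) ^ q - x ^ q ≤ q * 2 ^ (q - 1) * x ^ (q - 1) := by
  have hx0 : 0 < x := by linarith
  have hderiv : ∀ y ∈ Icc x (x + 1),
      HasDerivWithinAt (fun z : ℝ => z ^ q) (q * y ^ (q - 1)) (Icc x (x + 1)) y :=
    fun y hy => (Real.hasDerivAt_rpow_const (Or.inl (hx0.trans_le hy.1).ne')).hasDerivWithinAt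
  have hbound : ∀ y ∈ Icc x (x + 1), ‖q * y ^ (q - 1)‖ ≤ q * (2 * x) ^ (q - 1) := by
    intro y hy
    rw [Real.norm_eq_abs, abs_of_nonneg (by have := hx0.trans_le hy.1; positivity)]
    exact mul_le_mul_of_nonneg_left
      (Real.rpow_le_rpow (by linarith [hy.1]) (by linarith [hy.2]) (by linarith)) (by linarith)
  have hmvt := (convex_Icc x (x + 1)).norm_image_sub_le_of_norm_hasDerivWithin_le hderiv hbound
    (left_mem_Icc.2 (by linarith)) (right_mem_Icc.2 (by linarith))
  rw [Real.norm_eq_abs, add_sub_cancel_left, norm_one, mul_one,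
    Real.mul_rpow zero_le_two hx0.le, ← mul_assoc] at hmvt
  exact (le_abs_self _).trans hmvt

theorem norm_integral_integral_le_of_norm_le_abs_sub_rpow {E : Type*} [NormedAddCommGroup E]
    [NormedSpace ℝ E] {c : ℝ → ℝ → E} {K η t : ℝ} (hK : 0 ≤ K) (hη : η < 1) (ht : 0 ≤ t)
    (hc : ∀ s u, s ≠ u → ‖c s u‖ ≤ K * |s - u| ^ (-η)) :
    ‖∫ s in (0 : ℝ)..t, ∫ u in (0 : ℝ)..t, c s u‖ ≤ 2 * K / (1 - η) * t ^ (2 - η) := by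
  have hr : -1 < -η := by linarith
  have inner : ∀ s ∈ uIoc 0 t, ‖∫ u in (0 : ℝ)..t, c s u‖ ≤ K * (2 * t ^ (1 - η) / (1 - η)) := by
    intro s hs
    rw [uIoc_of_le ht] at hs
    have hne : ∀ᵐ u, u ∈ Ioc 0 t → ‖c s u‖ ≤ K * |s - u| ^ (-η) := by
      filter_upwards [Measure.ae_ne volume s] with u hu _ using hc s u hu.symm
    calc ‖∫ u in (0 : ℝ)..t, c s u‖ ≤ ∫ u in (0 : ℝ)..t, K * |s - u| ^ (-η) :=
          intervalIntegral.norm_integral_le_of_norm_le ht hne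
            ((intervalIntegrable_abs_sub_rpow hr s 0 t).const_mul K)
      _ = K * ∫ u in (0 : ℝ)..t, |s - u| ^ (-η) := intervalIntegral.integral_const_mul _ _
      _ ≤ K * (2 * t ^ (1 - η) / (1 - η)) := by
          have := integral_abs_sub_rpow_le hr ⟨hs.1.le, hs.2⟩
          rw [neg_add_eq_sub] at this
          gcongr
  calc ‖∫ s in (0 : ℝ)..t, ∫ u in (0 : ℝ)..t, c s u‖
      ≤ K * (2 * t ^ (1 - η) / (1 - η)) * |t - 0| :=
        intervalIntegral.norm_integral_le_of_norm_le_const inner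
    _ = 2 * K / (1 - η) * (t ^ (1 - η) * t ^ (1 : ℝ)) := by
        rw [sub_zero, abs_of_nonneg ht, Real.rpow_one]; ring
    _ = 2 * K / (1 - η) * t ^ (2 - η) := by
        rw [← Real.rpow_add' ht (by linarith)]; ring_nf

theorem norm_integral_le_of_norm_integral_rpow_nat_le {E : Type*} [NormedAddCommGroup E]
    [NormedSpace ℝ E] {F : ℝ → E} {S q α : ℝ} (hFm : AEStronglyMeasurable F)
    (hF : ∀ s, ‖F s‖ ≤ S) (hq : 1 ≤ q) (hα : q - 1 ≤ q * α) {N : ℕ} (hN : 1 ≤ N)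
    (hbound : ∀ n : ℕ, N ≤ n → ‖∫ s in (0 : ℝ)..(n : ℝ) ^ q, F s‖ ≤ S * ((n : ℝ) ^ q) ^ α)
    {t : ℝ} (ht : (N : ℝ) ^ q ≤ t) :
    ‖∫ s in (0 : ℝ)..t, F s‖ ≤ (1 + q * 2 ^ (q - 1)) * S * t ^ α := by
  have hS : 0 ≤ S := (norm_nonneg _).trans (hF 0)
  have hq0 : 0 < q := by linarith
  have hα0 : 0 ≤ α := by nlinarith
  have hN1 : (1 : ℝ) ≤ N := by exact_mod_cast hN
  have ht0 : 0 ≤ t := (Real.rpow_nonneg (by positivity) q).trans ht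
  set n := ⌊t ^ q⁻¹⌋₊
  have hn_le : (n : ℝ) ^ q ≤ t :=
    (Real.le_rpow_inv_iff_of_pos (by positivity) ht0 hq0).1 (Nat.floor_le (by positivity))
  have hle_succ : t ≤ ((n : ℝ) + 1) ^ q :=
    ((Real.rpow_inv_lt_iff_of_pos ht0 (by positivity) hq0).1 (Nat.lt_floor_add_one _)).le
  have hNn : N ≤ n := Nat.le_floor ((Real.le_rpow_inv_iff_of_pos (by positivity) ht0 hq0).2 ht)
  have hn1 : (1 : ℝ) ≤ n := hN1.trans (by exact_mod_cast hNn)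
  have hrt : ((n : ℝ) ^ q) ^ α ≤ t ^ α := Real.rpow_le_rpow (by positivity) hn_le hα0
  have hgap : t - (n : ℝ) ^ q ≤ q * 2 ^ (q - 1) * t ^ α :=
    calc t - (n : ℝ) ^ q ≤ ((n : ℝ) + 1) ^ q - (n : ℝ) ^ q := by linarith
      _ ≤ q * 2 ^ (q - 1) * (n : ℝ) ^ (q - 1) := rpow_add_one_sub_rpow_le hq hn1
      _ ≤ q * 2 ^ (q - 1) * (n : ℝ) ^ (q * α) := by gcongr
      _ ≤ q * 2 ^ (q - 1) * t ^ α := by rw [Real.rpow_mul (by positivity)]; gcongr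
  have hint : ∀ a b, IntervalIntegrable F volume a b := fun a b =>
    (intervalIntegrable_const (c := S)).mono_fun hFm.restrict (ae_of_all _ fun s => by
      simpa [abs_of_nonneg hS] using hF s)
  have htail : ‖∫ s in (n : ℝ) ^ q..t, F s‖ ≤ S * (t - (n : ℝ) ^ q) := by
    simpa [abs_of_nonneg (sub_nonneg.2 hn_le)] using
      intervalIntegral.norm_integral_le_of_norm_le_const (a := (n : ℝ) ^ q) (b := t)
        fun s _ => hF s
  rw [← intervalIntegral.integral_add_adjacent_intervals (hint 0 ((n : ℝ) ^ q)) (hint _ t)]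
  calc _ ≤ ‖∫ s in (0 : ℝ)..(n : ℝ) ^ q, F s‖ + ‖∫ s in (n : ℝ) ^ q..t, F s‖ := norm_add_le _ _
    _ ≤ S * t ^ α + S * (q * 2 ^ (q - 1) * t ^ α) := by
        gcongr
        · exact (hbound n hNn).trans (by gcongr)
        · exact htail.trans (by gcongr)
    _ = (1 + q * 2 ^ (q - 1)) * S * t ^ α := by ring

section Averages

variable {α : Type*} [MeasurableSpace α] {μ : Measure α}

theorem tendsto_measure_iUnion_add_atTop_zero {E : ℕ → Set α} {g : ℕ → ℝ≥0∞}
    (hg : ∑' n, g n ≠ ∞) (hE : ∀ᶠ n in atTop, μ (E n) ≤ g n) :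
    Tendsto (fun N => μ (⋃ k, E (k + N))) atTop (𝓝 0) := by
  obtain ⟨N₀, hN₀⟩ := eventually_atTop.1 hE
  refine tendsto_of_tendsto_of_tendsto_of_le_of_le' tendsto_const_nhds
    (ENNReal.tendsto_sum_nat_add g hg) (Eventually.of_forall fun _ => zero_le) ?_
  filter_upwards [eventually_ge_atTop N₀] with N hN
  exact (measure_iUnion_le _).trans (ENNReal.tsum_le_tsum fun k => hN₀ _ (by omega))

theorem eventually_le_measure_compl_iUnion_add [IsProbabilityMeasure μ]
    {E : ℕ → Set α} (hEm : ∀ n, MeasurableSet (E n)) {g : ℕ → ℝ≥0∞} (hg : ∑' n, g n ≠ ∞)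
    (hE : ∀ᶠ n in atTop, μ (E n) ≤ g n) {ω : ℝ} (hω : 0 < ω) :
    ∀ᶠ N in atTop, ENNReal.ofReal (1 - ω) ≤ μ (⋃ k, E (k + N))ᶜ := by
  filter_upwards [(tendsto_order.1 (tendsto_measure_iUnion_add_atTop_zero hg hE)).2 _
    (ENNReal.ofReal_pos.2 hω)] with N hN
  rw [prob_compl_eq_one_sub (.iUnion fun k => hEm _), ENNReal.ofReal_sub _ hω.le,
    ENNReal.ofReal_one]
  exact tsub_le_tsub_left hN.le 1

theorem measure_lt_norm_le_of_integral_norm_sq_le [IsFiniteMeasure μ] {E : Type*}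
    [NormedAddCommGroup E] {g : α → E} (hg : Integrable (fun x => ‖g x‖ ^ 2) μ) {c V : ℝ}
    (hc : 0 < c) (hV : ∫ x, ‖g x‖ ^ 2 ∂μ ≤ V) :
    μ {x | c < ‖g x‖} ≤ ENNReal.ofReal (V / c ^ 2) := by
  have hc2 : 0 < c ^ 2 := by positivity
  have markov := mul_meas_ge_le_integral_of_nonneg (Eventually.of_forall fun x => sq_nonneg ‖g x‖)
    hg (c ^ 2)
  have hsub : {x | c < ‖g x‖} ⊆ {x | c ^ 2 ≤ ‖g x‖ ^ 2} := fun x hx =>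
    pow_le_pow_left₀ hc.le hx.le 2
  rw [ENNReal.le_ofReal_iff_toReal_le (measure_ne_top _ _)
    (div_nonneg ((integral_nonneg fun x => sq_nonneg _).trans hV) hc2.le), le_div_iff₀' hc2]
  calc c ^ 2 * μ.real {x | c < ‖g x‖} ≤ c ^ 2 * μ.real {x | c ^ 2 ≤ ‖g x‖ ^ 2} :=
        mul_le_mul_of_nonneg_left (measureReal_mono hsub) hc2.le
    _ ≤ V := markov.trans hV

theorem ofReal_integral_norm_integral_sq {β 𝕜 : Type*} [MeasurableSpace β] [RCLike 𝕜]
    [IsFiniteMeasure μ] {ν : Measure β} [IsFiniteMeasure ν] {G : β → α → 𝕜}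
    (hG : Measurable (Function.uncurry G)) {S : ℝ} (hS : ∀ s x, ‖G s x‖ ≤ S) :
    ((∫ x, ‖∫ s, G s x ∂ν‖ ^ 2 ∂μ : ℝ) : 𝕜) = ∫ s, ∫ u, ∫ x, G s x * conj (G u x) ∂μ ∂ν ∂ν := by
  have hprod : ∀ s u x, ‖G s x * conj (G u x)‖ ≤ S * S := fun s u x => by
    rw [norm_mul, RCLike.norm_conj]
    exact mul_le_mul (hS s x) (hS u x) (norm_nonneg _) ((norm_nonneg _).trans (hS s x))
  have hG' : Measurable fun p : β × α => G p.1 p.2 := hG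
  have hconj : Measurable (conj : 𝕜 → 𝕜) := RCLike.continuous_conj.measurable
  have square : ∀ x, ((‖∫ s, G s x ∂ν‖ ^ 2 : ℝ) : 𝕜) = ∫ s, ∫ u, G s x * conj (G u x) ∂ν ∂ν := by
    intro x
    simp_rw [integral_const_mul]
    rw [integral_mul_const, integral_conj, RCLike.mul_conj, RCLike.ofReal_pow]
  have int_outer : Integrable (Function.uncurry fun x s => ∫ u, G s x * conj (G u x) ∂ν)
      (μ.prod ν) := by
    refine Integrable.of_bound ?_ (S * S * ν.real univ) (Eventually.of_forall fun p =>
      norm_integral_le_of_norm_le_const (Eventually.of_forall fun u => hprod _ _ _))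
    have hmeas : Measurable fun q : (α × β) × β => G q.1.2 q.1.1 * conj (G q.2 q.1.1) :=
      (hG'.comp (f := fun q : (α × β) × β => (q.1.2, q.1.1)) (by fun_prop)).mul
        (hconj.comp (hG'.comp (f := fun q : (α × β) × β => (q.2, q.1.1)) (by fun_prop)))
    exact hmeas.stronglyMeasurable.integral_prod_right'.aestronglyMeasurable
  have int_inner : ∀ s, Integrable (Function.uncurry fun x u => G s x * conj (G u x))
      (μ.prod ν) := fun s =>
    Integrable.of_bound
      ((hG'.comp (f := fun p : α × β => (s, p.1)) (by fun_prop)).mul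
        (hconj.comp (hG'.comp (f := Prod.swap) measurable_swap))).aestronglyMeasurable
      (S * S) (Eventually.of_forall fun p => hprod _ _ _)
  calc ((∫ x, ‖∫ s, G s x ∂ν‖ ^ 2 ∂μ : ℝ) : 𝕜)
      = ∫ x, ∫ s, ∫ u, G s x * conj (G u x) ∂ν ∂ν ∂μ := by
        rw [← integral_ofReal]; simp_rw [square]
    _ = ∫ s, ∫ x, ∫ u, G s x * conj (G u x) ∂ν ∂μ ∂ν := integral_integral_swap int_outer
    _ = ∫ s, ∫ u, ∫ x, G s x * conj (G u x) ∂μ ∂ν ∂ν :=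
        integral_congr_ae (Eventually.of_forall fun s => integral_integral_swap (int_inner s))

end Averages

section Flow

variable {𝕜 : Type*} [RCLike 𝕜] {M : Type*} [MeasurableSpace M] {μ : Measure M}
  {φ : ℝ → M → M} {f : M → 𝕜}

theorem integral_comp_flow_mul_conj (hφ : Measurable (Function.uncurry φ))
    (hφadd : ∀ s t, φ (s + t) = φ s ∘ φ t) (hφμ : ∀ t, MeasurePreserving (φ t) μ μ)
    (hf : Measurable f) (s u : ℝ) :
    ∫ x, f (φ s x) * conj (f (φ u x)) ∂μ = ∫ x, f (φ (s - u) x) * conj (f x) ∂μ := by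
  have hsplit : φ s = φ (s - u) ∘ φ u := by rw [← hφadd, sub_add_cancel]
  have hφu : Measurable (φ u) := hφ.comp measurable_prodMk_left
  have hg : Measurable fun y => f (φ (s - u) y) * conj (f y) :=
    (hf.comp (hφ.comp measurable_prodMk_left)).mul (RCLike.continuous_conj.measurable.comp hf)
  rw [hsplit]
  change ∫ x, (fun y => f (φ (s - u) y) * conj (f y)) (φ u x) ∂μ = _
  rw [← integral_map hφu.aemeasurable hg.aestronglyMeasurable, (hφμ u).map_eq]

theorem norm_integral_comp_flow_mul_conj_le [IsProbabilityMeasure μ]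
    (hφ : Measurable (Function.uncurry φ)) (hφadd : ∀ s t, φ (s + t) = φ s ∘ φ t)
    (hφμ : ∀ t, MeasurePreserving (φ t) μ μ) (hf : Measurable f) {S C η : ℝ}
    (hS : ∀ x, ‖f x‖ ≤ S) (hη : 0 ≤ η)
    (hcorr : ∀ t : ℝ, 1 ≤ t → ‖∫ x, f (φ t x) * conj (f x) ∂μ‖ ≤ C * S ^ 2 * t ^ (-η))
    {s u : ℝ} (hsu : s ≠ u) :
    ‖∫ x, f (φ s x) * conj (f (φ u x)) ∂μ‖ ≤ max C 1 * S ^ 2 * |s - u| ^ (-η) := by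
  have of_pos : ∀ r : ℝ, 0 < r →
      ‖∫ x, f (φ r x) * conj (f x) ∂μ‖ ≤ max C 1 * S ^ 2 * r ^ (-η) := by
    intro r hr
    rcases le_or_gt 1 r with hr1 | hr1
    · exact (hcorr r hr1).trans (by gcongr; exact le_max_left _ _)
    have hS2 : ‖∫ x, f (φ r x) * conj (f x) ∂μ‖ ≤ S ^ 2 := by
      simpa using norm_integral_le_of_norm_le_const (μ := μ) (C := S ^ 2)
        (Eventually.of_forall fun x => by
          rw [norm_mul, RCLike.norm_conj, sq]
          exact mul_le_mul (hS _) (hS _) (norm_nonneg _) ((norm_nonneg _).trans (hS x)))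
    calc _ ≤ S ^ 2 := hS2
      _ ≤ max C 1 * S ^ 2 := le_mul_of_one_le_left (sq_nonneg S) (le_max_right _ _)
      _ ≤ max C 1 * S ^ 2 * r ^ (-η) := le_mul_of_one_le_right (by positivity)
          (Real.one_le_rpow_of_pos_of_le_one_of_nonpos hr hr1.le (by linarith))
  rcases hsu.lt_or_gt with h | h
  · have hswap : ∫ x, f (φ s x) * conj (f (φ u x)) ∂μ
        = conj (∫ x, f (φ u x) * conj (f (φ s x)) ∂μ) := by
      rw [← integral_conj]
      simp [mul_comm]
    rw [hswap, RCLike.norm_conj, integral_comp_flow_mul_conj hφ hφadd hφμ hf, abs_sub_comm,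
      abs_of_pos (sub_pos.2 h)]
    exact of_pos _ (sub_pos.2 h)
  · rw [integral_comp_flow_mul_conj hφ hφadd hφμ hf, abs_of_pos (sub_pos.2 h)]
    exact of_pos _ (sub_pos.2 h)

theorem stronglyMeasurable_intervalIntegral_flow (hφ : Measurable (Function.uncurry φ))
    (hf : Measurable f) (a b : ℝ) : StronglyMeasurable fun x => ∫ s in a..b, f (φ s x) := by
  have hF : StronglyMeasurable fun p : M × ℝ => f (φ p.2 p.1) :=
    (hf.comp (hφ.comp measurable_swap)).stronglyMeasurable
  exact hF.integral_prod_right'.sub hF.integral_prod_right'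

theorem integral_norm_intervalIntegral_flow_sq_le [IsProbabilityMeasure μ]
    (hφ : Measurable (Function.uncurry φ)) (hφadd : ∀ s t, φ (s + t) = φ s ∘ φ t)
    (hφμ : ∀ t, MeasurePreserving (φ t) μ μ) (hf : Measurable f) {S C η : ℝ}
    (hS : ∀ x, ‖f x‖ ≤ S) (hη₀ : 0 ≤ η) (hη₁ : η < 1)
    (hcorr : ∀ t : ℝ, 1 ≤ t → ‖∫ x, f (φ t x) * conj (f x) ∂μ‖ ≤ C * S ^ 2 * t ^ (-η))
    {t : ℝ} (ht : 0 ≤ t) :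
    ∫ x, ‖∫ s in (0 : ℝ)..t, f (φ s x)‖ ^ 2 ∂μ ≤ 2 * (max C 1 * S ^ 2) / (1 - η) * t ^ (2 - η) := by
  have hfubini := ofReal_integral_norm_integral_sq (μ := μ) (ν := volume.restrict (Ioc 0 t))
    (G := fun s x => f (φ s x)) (hf.comp hφ) (fun s x => hS _)
  simp only [← intervalIntegral.integral_of_le ht] at hfubini
  rw [← abs_of_nonneg (integral_nonneg fun x => sq_nonneg _), ← RCLike.norm_ofReal (K := 𝕜),
    hfubini]
  exact norm_integral_integral_le_of_norm_le_abs_sub_rpow (by positivity) hη₁ ht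
    fun s u hsu => norm_integral_comp_flow_mul_conj_le hφ hφadd hφμ hf hS hη₀ hcorr hsu

theorem measure_lt_norm_intervalIntegral_flow_le [IsProbabilityMeasure μ]
    (hφ : Measurable (Function.uncurry φ)) (hφadd : ∀ s t, φ (s + t) = φ s ∘ φ t)
    (hφμ : ∀ t, MeasurePreserving (φ t) μ μ) (hf : Measurable f) {S C η : ℝ}
    (hS : ∀ x, ‖f x‖ ≤ S) (hη₀ : 0 ≤ η) (hη₁ : η < 1)
    (hcorr : ∀ t : ℝ, 1 ≤ t → ‖∫ x, f (φ t x) * conj (f x) ∂μ‖ ≤ C * S ^ 2 * t ^ (-η))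
    {r : ℝ} (hr : 0 < r) :
    μ {x | S * r ^ (1 - η / 4) < ‖∫ s in (0 : ℝ)..r, f (φ s x)‖}
      ≤ ENNReal.ofReal (2 * max C 1 / (1 - η) * r ^ (-(η / 2))) := by
  have hS0 : 0 ≤ S := (norm_nonneg _).trans (hS (nonempty_of_isProbabilityMeasure μ).some)
  have hA := stronglyMeasurable_intervalIntegral_flow hφ hf 0 r
  have hAS : ∀ x, ‖∫ s in (0 : ℝ)..r, f (φ s x)‖ ≤ S * r := fun x => by
    simpa [abs_of_pos hr] using
      intervalIntegral.norm_integral_le_of_norm_le_const (a := 0) (b := r) fun s _ => hS (φ s x)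
  rcases hS0.eq_or_lt with rfl | hSpos
  · refine (measure_mono_null (fun x hx => ?_) measure_empty).le.trans zero_le
    have := hAS x
    simp only [zero_mul, mem_ofPred_eq] at hx this
    exact (hx.trans_le this).false
  have hint : Integrable (fun x => ‖∫ s in (0 : ℝ)..r, f (φ s x)‖ ^ 2) μ :=
    Integrable.of_bound (hA.norm.pow 2).aestronglyMeasurable ((S * r) ^ 2)
      (Eventually.of_forall fun x => by
        rw [Real.norm_of_nonneg (sq_nonneg _)]
        exact pow_le_pow_left₀ (norm_nonneg _) (hAS x) 2)
  refine (measure_lt_norm_le_of_integral_norm_sq_le hint (by positivity)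
    (integral_norm_intervalIntegral_flow_sq_le hφ hφadd hφμ hf hS hη₀ hη₁ hcorr hr.le)).trans
    (le_of_eq (congrArg ENNReal.ofReal ?_))
  have hsq : (S * r ^ (1 - η / 4)) ^ 2 = S ^ 2 * r ^ (2 - η / 2) := by
    rw [mul_pow, ← Real.rpow_mul_natCast hr.le]; ring_nf
  have hsplit : r ^ (2 - η) = r ^ (-(η / 2)) * r ^ (2 - η / 2) := by
    rw [← Real.rpow_add hr]; ring_nf
  have : 0 < r ^ (2 - η / 2) := by positivity
  rw [hsq, hsplit]
  field_simp

end Flow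

theorem ergodic_integral_pointwise_bound_general (C_M ηt : ℝ)
    (hη : ηt ∈ Set.Ioo (0 : ℝ) 1) :
    ∃ C' : ℝ, 0 < C' ∧
      ∀ (M : Type) [MeasurableSpace M] (μ : Measure M) [IsProbabilityMeasure μ]
        (φ : ℝ → M → M),
        Measurable (Function.uncurry φ) → φ 0 = id →
        (∀ s t, φ (s + t) = φ s ∘ φ t) → (∀ t, MeasurePreserving (φ t) μ μ) →
        ∀ (f : M → ℂ), Measurable f →
        ∀ S : ℝ, (∀ x, ‖f x‖ ≤ S) →
        (∫ x, f x ∂μ) = 0 →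
        (∀ t : ℝ, 1 ≤ t →
          ‖∫ x, f (φ t x) * (starRingEnd ℂ) (f x) ∂μ‖ ≤ C_M * S ^ 2 * t ^ (-ηt)) →
        ∀ ω : ℝ, 0 < ω →
          ∃ (Y : Set M) (m' : ℝ), MeasurableSet Y ∧ ENNReal.ofReal (1 - ω) ≤ μ Y ∧ 1 ≤ m' ∧
            ∀ x ∈ Y, ∀ t : ℝ, m' ≤ t →
              ‖∫ s in (0 : ℝ)..t, f (φ s x)‖ ≤ C' * S * t ^ (1 - ηt / 4) := by
  obtain ⟨hη₀, hη₁⟩ := hη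
  have hη₁' : 0 < 1 - ηt := by linarith
  set q := 3 / ηt with hq
  have hq1 : 1 ≤ q := by rw [hq, le_div_iff₀ hη₀]; linarith
  refine ⟨1 + q * 2 ^ (q - 1), by positivity, ?_⟩
  intro M _ μ _ φ hφ _ hφadd hφμ f hf S hS _ hcorr ω hω
  set E : ℕ → Set M := fun n =>
    {x | S * ((n : ℝ) ^ q) ^ (1 - ηt / 4) < ‖∫ s in (0 : ℝ)..(n : ℝ) ^ q, f (φ s x)‖}
  set K := 2 * max C_M 1 / (1 - ηt)
  have hE : ∀ᶠ n : ℕ in atTop, μ (E n) ≤ ENNReal.ofReal (K * (n : ℝ) ^ (-(3 / 2) : ℝ)) := by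
    filter_upwards [eventually_ge_atTop 1] with n hn
    have hpow : ((n : ℝ) ^ q) ^ (-(ηt / 2)) = (n : ℝ) ^ (-(3 / 2) : ℝ) := by
      rw [← Real.rpow_mul n.cast_nonneg, hq]; field_simp
    rw [← hpow]
    exact measure_lt_norm_intervalIntegral_flow_le hφ hφadd hφμ hf hS hη₀.le hη₁ hcorr
      (by positivity)
  have hsum : ∑' n : ℕ, ENNReal.ofReal (K * (n : ℝ) ^ (-(3 / 2) : ℝ)) ≠ ⊤ := by
    rw [← ENNReal.ofReal_tsum_of_nonneg (fun n => by positivity)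
      ((Real.summable_nat_rpow.2 (by norm_num)).mul_left _)]
    exact ENNReal.ofReal_ne_top
  have hEm : ∀ n, MeasurableSet (E n) := fun n =>
    measurableSet_lt measurable_const
      (stronglyMeasurable_intervalIntegral_flow hφ hf _ _).measurable.norm
  obtain ⟨N, hNω, hN1⟩ :=
    ((eventually_le_measure_compl_iUnion_add hEm hsum hE hω).and (eventually_ge_atTop 1)).exists
  refine ⟨(⋃ k, E (k + N))ᶜ, (N : ℝ) ^ q, (MeasurableSet.iUnion fun k => hEm _).compl, hNω, ?_, ?_⟩
  · exact Real.one_le_rpow (by exact_mod_cast hN1) (by linarith)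
  · intro x hx t ht
    refine norm_integral_le_of_norm_integral_rpow_nat_le
      (hf.comp (hφ.comp measurable_prodMk_right)).aestronglyMeasurable (fun s => hS _) hq1 ?_ hN1
      (fun n hn => not_lt.1 fun hlt => hx (mem_iUnion.2 ⟨n - N, ?_⟩)) ht
    · rw [hq]; field_simp; linarith
    · rwa [Nat.sub_add_cancel hn]

/-- Polynomial bound for ergodic averages on a large-measure set: if the correlations of a
mean-zero bounded function `f` decay as `C_M S² t^(-η̃)`, then (with `η' = η̃/4`) there is a
constant `C'`, depending only on `C_M` and `η̃`, such that for every `ω > 0` there are a set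
`Y` with `μ(Y) ≥ 1 - ω` and `m' ≥ 1` with `|∫₀^t f(φ^s x) ds| ≤ C' S t^(1-η')` for all
`x ∈ Y` and `t ≥ m'`. -/
theorem ergodic_integral_pointwise_bound (C_M ηt : ℝ)
    (hCM : 0 < C_M) (hη : ηt ∈ Set.Ioo (0 : ℝ) 1) :
    ∃ C' : ℝ, 0 < C' ∧
      ∀ (M : Type) [MeasurableSpace M] (μ : Measure M) [IsProbabilityMeasure μ]
        (φ : ℝ → M → M),
        Measurable (Function.uncurry φ) → φ 0 = id →
        (∀ s t, φ (s + t) = φ s ∘ φ t) → (∀ t, MeasurePreserving (φ t) μ μ) →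
        ∀ (f : M → ℂ), Measurable f →
        ∀ S : ℝ, (∀ x, ‖f x‖ ≤ S) →
        (∫ x, f x ∂μ) = 0 →
        (∀ t : ℝ, 1 ≤ t →
          ‖∫ x, f (φ t x) * (starRingEnd ℂ) (f x) ∂μ‖ ≤ C_M * S ^ 2 * t ^ (-ηt)) →
        ∀ ω : ℝ, 0 < ω →
          ∃ (Y : Set M) (m' : ℝ), MeasurableSet Y ∧ ENNReal.ofReal (1 - ω) ≤ μ Y ∧ 1 ≤ m' ∧
            ∀ x ∈ Y, ∀ t : ℝ, m' ≤ t →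
              ‖∫ s in (0 : ℝ)..t, f (φ s x)‖ ≤ C' * S * t ^ (1 - ηt / 4) :=
  ergodic_integral_pointwise_bound_general C_M ηt hη
end

section
/- Let (M, μ) be a probability space and φ : ℝ × M → M a jointly measurable measure-preserving flow. Let α : M → ℝ be measurable with C_α^{−1} ≤ α ≤ C_α for some C_α > 1 and with ∫_M α dμ = 1. Suppose there are constants C_M > 0, η̃ ∈ (0,1) and S ≥ sup_M |α − 1| such that |∫_M (α−1)(φ^t(x)) · (α−1)(x) dμ(x)| ≤ C_M S² t^{−η̃} for all t ≥ 1. For x ∈ M and t ∈ ℝ set ξ(x,t) = ∫₀^t α(φ^r(x)) dr, and let w(x, ·) : ℝ → ℝ be the inverse of the strictly increasing bijection ξ(x, ·) : ℝ → ℝ. Then there exists η ∈ (0, 1/4), depending only on C_M, η̃, S and C_α, such that for every ω > 0 there exist a measurable set Y ⊆ M with μ(Y) ≥ 1 − ω and a number m ≥ 1 such that for all x ∈ Y and all t ≥ m: |ξ(x,t) − t| ≤ C_α^{−4} t^{1−η} and |w(x,t) − t| ≤ C_α^{−4} t^{1−η}. -/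
/-!
Put `f = α - 1`, so that `ξ(x,t) - t = ∫₀ᵗ f(φ^r x) dr`. Invariance of `μ` makes the correlation
`∫ f(φ^r x) f(φ^s x) dμ` a function of `r - s`, so the decay hypothesis gives
`∫ (ξ(·,t) - t)² dμ ≲ t^(2-η̃)`. By Chebyshev's inequality the events
`|ξ(x,t_k) - t_k| > c t_k^(1-η)` along the grid `t_k = k^b` have summable probabilities once
`b (η̃ - 2η) > 1`, so outside a set of measure `ω` none of them occurs for `k ≥ k₀`. Since
`t ↦ ξ(x,t) - t` is `S`-Lipschitz and the gaps `t_{k+1} - t_k ≤ b t^(1-1/b)` are `o(t^(1-η))`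
when `b η < 1`, the bound extends to all large `t`; `η = η̃/8` and `b = ⌈2/η̃⌉` meet both
constraints. Finally `C_α⁻¹ ≤ ∂ₜξ ≤ C_α` puts `u = w(x,t)` in `[t/C_α, C_α t]`, and
`|w(x,t) - t| = |u - ξ(x,u)|` costs one more factor `C_α`, whence `c = C_α⁻⁵`.
-/

open MeasureTheory Filter Set Function

namespace TimeChange

theorem exists_nat_pow_le_sub_le {b : ℕ} (hb : b ≠ 0) {t : ℝ} (ht : 0 ≤ t) :
    ∃ n : ℕ, t ^ (b⁻¹ : ℝ) < n + 1 ∧ (n : ℝ) ^ b ≤ t ∧ t - n ^ b ≤ b * t ^ (1 - (b⁻¹ : ℝ)) := by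
  set r := t ^ (b⁻¹ : ℝ)
  have hr : 0 ≤ r := by positivity
  have hrb : r ^ b = t := Real.rpow_inv_natCast_pow ht hb
  have hn : (⌊r⌋₊ : ℝ) ≤ r := Nat.floor_le hr
  refine ⟨⌊r⌋₊, Nat.lt_floor_add_one r, hrb ▸ by gcongr, ?_⟩
  have hgap : r ^ b - ⌊r⌋₊ ^ b ≤ b * r ^ (b - 1) := by
    calc r ^ b - ⌊r⌋₊ ^ b ≤ |r - ⌊r⌋₊| * b * max |r| |(⌊r⌋₊ : ℝ)| ^ (b - 1) :=
          (le_abs_self _).trans (abs_pow_sub_pow_le _ _ _)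
      _ ≤ 1 * b * r ^ (b - 1) := by
          rw [abs_of_nonneg (sub_nonneg.2 hn), abs_of_nonneg hr, Nat.abs_cast,
            max_eq_left hn]
          gcongr
          linarith [Nat.lt_floor_add_one r]
      _ = b * r ^ (b - 1) := by ring
  have hexp : r ^ (b - 1) = t ^ (1 - (b⁻¹ : ℝ)) := by
    rw [← Real.rpow_natCast, ← Real.rpow_mul ht, Nat.cast_sub (Nat.one_le_iff_ne_zero.2 hb),
      Nat.cast_one]
    congr 1
    field_simp
  rwa [hrb, hexp] at hgap

theorem exists_forall_abs_le_rpow_of_abs_le_on_grid {L c η : ℝ} {b : ℕ} (hL : 0 ≤ L)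
    (hc : 0 < c) (hb : b ≠ 0) (hbη : b * η < 1) (k₀ : ℕ) :
    ∃ m, 1 ≤ m ∧ ∀ g : ℝ → ℝ, (∀ s t, s ≤ t → |g t - g s| ≤ L * (t - s)) →
      (∀ k, k₀ ≤ k → |g (((k : ℝ) + 1) ^ b)| ≤ c * (((k : ℝ) + 1) ^ b) ^ (1 - η)) →
      ∀ t, m ≤ t → |g t| ≤ 2 * c * t ^ (1 - η) := by
  have hbpos : (0 : ℝ) < b := Nat.cast_pos.2 (Nat.pos_of_ne_zero hb)
  have hδ : 0 < (b⁻¹ : ℝ) - η := by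
    rw [sub_pos, ← one_div]
    exact (lt_div_iff₀' hbpos).2 hbη
  have hsmall : ∀ᶠ t in atTop, L * b * t ^ (-((b⁻¹ : ℝ) - η)) ≤ c := by
    simpa using ((tendsto_rpow_neg_atTop hδ).const_mul (L * b)).eventually_le_const
      (by simpa using hc)
  obtain ⟨m₁, hm₁⟩ := eventually_atTop.1 hsmall
  refine ⟨max (max m₁ 1) (((k₀ : ℝ) + 1) ^ b), le_max_of_le_left (le_max_right _ _),
    fun g hlip hgrid t ht => ?_⟩
  have ht₁ : m₁ ≤ t := le_trans (le_max_of_le_left (le_max_left _ _)) ht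
  have ht0 : 0 < t := lt_of_lt_of_le one_pos (le_trans (le_max_of_le_left (le_max_right _ _)) ht)
  obtain ⟨n, hnr, hnt, hgap⟩ := exists_nat_pow_le_sub_le hb ht0.le
  have hk₀n : k₀ < n := by
    have hroot : (k₀ : ℝ) + 1 ≤ t ^ (b⁻¹ : ℝ) := by
      rw [← Real.pow_rpow_inv_natCast (by positivity : (0 : ℝ) ≤ k₀ + 1) hb]
      gcongr
      exact le_trans (le_max_right _ _) ht
    exact_mod_cast (show (k₀ : ℝ) < n by linarith)
  obtain ⟨k, rfl⟩ : ∃ k, n = k + 1 := ⟨n - 1, by omega⟩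
  have hk : k₀ ≤ k := by omega
  push_cast at hnt hgap
  have hsplit : t ^ (1 - (b⁻¹ : ℝ)) = t ^ (1 - η) * t ^ (-((b⁻¹ : ℝ) - η)) := by
    rw [← Real.rpow_add ht0]; ring_nf
  have hη1 : 0 ≤ 1 - η := by
    have : (b⁻¹ : ℝ) ≤ 1 := inv_le_one_of_one_le₀ (by exact_mod_cast Nat.one_le_iff_ne_zero.2 hb)
    linarith
  calc |g t| ≤ |g (((k : ℝ) + 1) ^ b)| + |g t - g (((k : ℝ) + 1) ^ b)| := by
        simpa using abs_add_le (g (((k : ℝ) + 1) ^ b)) (g t - g (((k : ℝ) + 1) ^ b))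
    _ ≤ c * (((k : ℝ) + 1) ^ b) ^ (1 - η) + L * (t - ((k : ℝ) + 1) ^ b) :=
        add_le_add (hgrid k hk) (hlip _ _ hnt)
    _ ≤ c * t ^ (1 - η) + L * (b * t ^ (1 - (b⁻¹ : ℝ))) := by
        gcongr
    _ = c * t ^ (1 - η) + (L * b * t ^ (-((b⁻¹ : ℝ) - η))) * t ^ (1 - η) := by
        rw [hsplit]; ring
    _ ≤ c * t ^ (1 - η) + c * t ^ (1 - η) := by
        gcongr; exact hm₁ t ht₁
    _ = 2 * c * t ^ (1 - η) := by ring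

section Probability

variable {M : Type*} [MeasurableSpace M] {μ : Measure M}

theorem measure_lt_abs_le_of_integral_sq_le [IsFiniteMeasure μ] {g : M → ℝ}
    (hg : Integrable (fun x => g x ^ 2) μ) {c K T ηt η : ℝ} (hc : 0 < c) (hT : 0 < T)
    (hvar : ∫ x, g x ^ 2 ∂μ ≤ K * T ^ (2 - ηt)) :
    μ {x | c * T ^ (1 - η) < |g x|} ≤ ENNReal.ofReal (K / c ^ 2 * T ^ (-(ηt - 2 * η))) := by
  set L := c * T ^ (1 - η)
  have hL : 0 < L := by positivity
  have hsub : {x | L < |g x|} ⊆ {x | L ^ 2 ≤ g x ^ 2} := fun x (hx : L < |g x|) =>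
    show L ^ 2 ≤ g x ^ 2 from sq_abs (g x) ▸ pow_le_pow_left₀ hL.le hx.le 2
  have hmarkov := mul_meas_ge_le_integral_of_nonneg (ae_of_all _ fun x => sq_nonneg (g x)) hg
    (L ^ 2)
  have hLpow : L ^ 2 * T ^ (-(ηt - 2 * η)) = c ^ 2 * T ^ (2 - ηt) := by
    rw [mul_pow, ← Real.rpow_natCast (T ^ (1 - η)), ← Real.rpow_mul hT.le, mul_assoc,
      ← Real.rpow_add hT]
    ring_nf
  calc μ {x | L < |g x|} ≤ μ {x | L ^ 2 ≤ g x ^ 2} := measure_mono hsub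
    _ = ENNReal.ofReal (μ.real {x | L ^ 2 ≤ g x ^ 2}) := (ofReal_measureReal).symm
    _ ≤ ENNReal.ofReal (K / c ^ 2 * T ^ (-(ηt - 2 * η))) := by
        refine ENNReal.ofReal_le_ofReal (le_of_mul_le_mul_left ?_ (by positivity : 0 < L ^ 2))
        calc L ^ 2 * μ.real {x | L ^ 2 ≤ g x ^ 2} ≤ K * T ^ (2 - ηt) := hmarkov.trans hvar
          _ = L ^ 2 * (K / c ^ 2 * T ^ (-(ηt - 2 * η))) := by
              rw [mul_left_comm, hLpow]; field_simp

theorem exists_ofReal_one_sub_le_measure_compl_iUnion [IsProbabilityMeasure μ]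
    {B : ℕ → Set M} (hB : ∀ k, MeasurableSet (B k)) (hsum : ∑' k, μ (B k) ≠ ⊤) {ω : ℝ}
    (hω : 0 < ω) : ∃ k₀, ENNReal.ofReal (1 - ω) ≤ μ (⋃ k, B (k + k₀))ᶜ := by
  obtain ⟨k₀, hk₀⟩ := ((ENNReal.tendsto_sum_nat_add _ hsum).eventually_lt_const
    (ENNReal.ofReal_pos.2 hω)).exists
  refine ⟨k₀, ?_⟩
  rw [prob_compl_eq_one_sub (MeasurableSet.iUnion fun k => hB _), ENNReal.ofReal_sub _ hω.le,
    ENNReal.ofReal_one]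
  exact tsub_le_tsub_left ((measure_iUnion_le _).trans hk₀.le) 1

theorem exists_forall_abs_le_rpow_of_integral_sq_le [IsProbabilityMeasure μ] {A : M → ℝ → ℝ}
    {L K ηt η : ℝ} {b : ℕ} (hA : ∀ t, Measurable fun x => A x t) (hA0 : ∀ x, A x 0 = 0)
    (hlip : ∀ x s t, s ≤ t → |A x t - A x s| ≤ L * (t - s))
    (hvar : ∀ t, 1 ≤ t → ∫ x, A x t ^ 2 ∂μ ≤ K * t ^ (2 - ηt))
    (hbη : b * η < 1) (hgain : 1 < b * (ηt - 2 * η)) {c ω : ℝ} (hc : 0 < c) (hω : 0 < ω) :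
    ∃ Y m, MeasurableSet Y ∧ ENNReal.ofReal (1 - ω) ≤ μ Y ∧ 1 ≤ m ∧
      ∀ x ∈ Y, ∀ t, m ≤ t → |A x t| ≤ c * t ^ (1 - η) := by
  have hb : b ≠ 0 := by rintro rfl; norm_num at hgain
  have hL : 0 ≤ L := by
    obtain ⟨x⟩ := nonempty_of_isProbabilityMeasure μ
    simpa using (abs_nonneg _).trans (hlip x 0 1 zero_le_one)
  have hK : 0 ≤ K := by
    simpa using (integral_nonneg fun x => sq_nonneg (A x 1)).trans (hvar 1 le_rfl)
  set T : ℕ → ℝ := fun k => ((k : ℝ) + 1) ^ b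
  have hT : ∀ k, 1 ≤ T k := fun k => one_le_pow₀ (by linarith [k.cast_nonneg (α := ℝ)])
  set bad : ℕ → Set M := fun k => {x | c / 2 * T k ^ (1 - η) < |A x (T k)|}
  have hbad : ∀ k, MeasurableSet (bad k) := fun k =>
    measurableSet_lt measurable_const (hA _).abs
  have hsq : ∀ t, 0 ≤ t → Integrable (fun x => A x t ^ 2) μ := fun t ht =>
    Integrable.of_bound ((hA t).pow_const 2).aestronglyMeasurable ((L * t) ^ 2)
      (ae_of_all _ fun x => by
        rw [Real.norm_eq_abs, abs_pow]
        gcongr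
        simpa [hA0] using hlip x 0 t ht)
  set p : ℕ → ℝ := fun k => K / (c / 2) ^ 2 * ((k : ℝ) + 1) ^ (b * -(ηt - 2 * η))
  have hμbad : ∀ k, μ (bad k) ≤ ENNReal.ofReal (p k) := fun k => by
    simpa only [p, Real.rpow_natCast_mul (by positivity : (0 : ℝ) ≤ k + 1)] using
      measure_lt_abs_le_of_integral_sq_le (hsq _ (by linarith [hT k])) (half_pos hc)
        (by linarith [hT k]) (hvar _ (hT k))
  have hp : Summable p := by
    refine Summable.mul_left _ ?_
    simpa using (summable_nat_add_iff 1).2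
      (Real.summable_nat_rpow.2 (by linarith : b * -(ηt - 2 * η) < -1))
  have hsum : ∑' k, μ (bad k) ≠ ⊤ := by
    refine ne_top_of_le_ne_top ?_ (ENNReal.tsum_le_tsum hμbad)
    rw [← ENNReal.ofReal_tsum_of_nonneg (fun k => by positivity) hp]
    exact ENNReal.ofReal_ne_top
  obtain ⟨k₀, hk₀⟩ := exists_ofReal_one_sub_le_measure_compl_iUnion hbad hsum hω
  obtain ⟨m, hm1, hm⟩ := exists_forall_abs_le_rpow_of_abs_le_on_grid hL (half_pos hc) hb hbη k₀
  refine ⟨_, m, (MeasurableSet.iUnion fun k => hbad _).compl, hk₀, hm1, fun x hx t ht => ?_⟩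
  have hgrid : ∀ k, k₀ ≤ k → |A x (T k)| ≤ c / 2 * T k ^ (1 - η) := fun k hk =>
    not_lt.1 fun h => hx (mem_iUnion.2 ⟨k - k₀, by rwa [Nat.sub_add_cancel hk]⟩)
  simpa [mul_div_cancel₀] using hm (A x) (hlip x) hgrid t ht

end Probability

theorem intervalIntegrable_of_abs_le {g : ℝ → ℝ} (hg : Measurable g) {B : ℝ}
    (hB : ∀ r, |g r| ≤ B) (a b : ℝ) : IntervalIntegrable g volume a b :=
  ⟨Measure.integrableOn_of_bounded measure_Ioc_lt_top.ne hg.aestronglyMeasurable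
      (ae_of_all _ hB),
    Measure.integrableOn_of_bounded measure_Ioc_lt_top.ne hg.aestronglyMeasurable
      (ae_of_all _ hB)⟩

theorem intervalIntegral_sub_intervalIntegral_mem_Icc {g : ℝ → ℝ}
    (hg : ∀ a b, IntervalIntegrable g volume a b) {lo hi : ℝ} (hgb : ∀ r, g r ∈ Icc lo hi)
    {a b : ℝ} (hab : a ≤ b) :
    (∫ r in (0 : ℝ)..b, g r) - ∫ r in (0 : ℝ)..a, g r ∈ Icc (lo * (b - a)) (hi * (b - a)) := by
  rw [intervalIntegral.integral_interval_sub_left (hg 0 b) (hg 0 a)]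
  constructor
  · simpa [mul_comm] using intervalIntegral.integral_mono_on hab intervalIntegrable_const
      (hg a b) fun r _ => (hgb r).1
  · simpa [mul_comm] using intervalIntegral.integral_mono_on hab (hg a b)
      intervalIntegrable_const fun r _ => (hgb r).2

theorem abs_intervalIntegral_sub_intervalIntegral_le {g : ℝ → ℝ}
    (hg : ∀ a b, IntervalIntegrable g volume a b) {S : ℝ} (hgS : ∀ r, |g r| ≤ S) {s t : ℝ}
    (hst : s ≤ t) : |(∫ r in (0 : ℝ)..t, g r) - ∫ r in (0 : ℝ)..s, g r| ≤ S * (t - s) := by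
  have h := intervalIntegral_sub_intervalIntegral_mem_Icc hg (fun r => abs_le.1 (hgS r)) hst
  exact abs_le.2 ⟨by linarith [h.1], h.2⟩

theorem intervalIntegral_comp_sub_le {G : ℝ → ℝ} (hG : Continuous G)
    (hG0 : ∀ u, 0 ≤ G u) {r t : ℝ} (hr : r ∈ Icc 0 t) :
    ∫ s in (0 : ℝ)..t, G (r - s) ≤ ∫ u in -t..t, G u := by
  rw [intervalIntegral.integral_comp_sub_left, sub_zero]
  exact intervalIntegral.integral_mono_interval (by linarith [hr.1]) (by linarith [hr.2, hr.1])
    hr.2 (ae_of_all _ hG0) (hG.intervalIntegrable _ _)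

theorem continuous_max_abs_one_rpow (p : ℝ) : Continuous fun u : ℝ => (max |u| 1) ^ p :=
  (continuous_abs.max continuous_const).rpow_const fun _ =>
    Or.inl (lt_max_of_lt_right one_pos).ne'

theorem intervalIntegral_max_abs_one_rpow_neg_le {ηt t : ℝ} (hηt : ηt ∈ Ico 0 1) (ht : 0 ≤ t) :
    ∫ u in -t..t, (max |u| 1) ^ (-ηt) ≤ 2 / (1 - ηt) * t ^ (1 - ηt) := by
  obtain ⟨hη0, hη1⟩ := hηt
  have hg := continuous_max_abs_one_rpow (-ηt)
  have heven : ∫ u in -t..0, (max |u| 1) ^ (-ηt) = ∫ u in (0 : ℝ)..t, (max |u| 1) ^ (-ηt) := by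
    simpa using (intervalIntegral.integral_comp_neg (a := 0) (b := t)
      fun u : ℝ => (max |u| 1) ^ (-ηt)).symm
  have hhalf : ∫ u in (0 : ℝ)..t, (max |u| 1) ^ (-ηt) ≤ t ^ (1 - ηt) / (1 - ηt) := by
    calc ∫ u in (0 : ℝ)..t, (max |u| 1) ^ (-ηt) ≤ ∫ u in (0 : ℝ)..t, u ^ (-ηt) :=
          intervalIntegral.integral_mono_on_of_le_Ioo ht (hg.intervalIntegrable _ _)
            (intervalIntegral.intervalIntegrable_rpow' (by linarith)) fun u hu =>
              Real.rpow_le_rpow_of_nonpos hu.1 ((le_abs_self u).trans (le_max_left _ _))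
                (by linarith)
      _ = t ^ (1 - ηt) / (1 - ηt) := by
          rw [integral_rpow (Or.inl (by linarith)), neg_add_eq_sub,
            Real.zero_rpow (by linarith), sub_zero]
  rw [← intervalIntegral.integral_add_adjacent_intervals (hg.intervalIntegrable (-t) 0)
    (hg.intervalIntegrable 0 t), heven]
  calc _ ≤ t ^ (1 - ηt) / (1 - ηt) + t ^ (1 - ηt) / (1 - ηt) := add_le_add hhalf hhalf
    _ = 2 / (1 - ηt) * t ^ (1 - ηt) := by ring

section SecondMoment

variable {M : Type*} [MeasurableSpace M] {μ : Measure M}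

theorem measurable_intervalIntegral_of_uncurry {F : ℝ → M → ℝ} (hF : Measurable (uncurry F))
    (a b : ℝ) : Measurable fun x => ∫ r in a..b, F r x := by
  have h : StronglyMeasurable (uncurry fun x r => F r x) :=
    (hF.comp measurable_swap).stronglyMeasurable
  simp only [intervalIntegral]
  exact h.integral_prod_right.measurable.sub h.integral_prod_right.measurable

theorem integral_sq_intervalIntegral_le [IsFiniteMeasure μ] {F : ℝ → M → ℝ}
    (hF : Measurable (uncurry F)) {B : ℝ} (hB : ∀ r x, |F r x| ≤ B) {G : ℝ → ℝ}
    (hG : Continuous G) (hG0 : ∀ u, 0 ≤ G u)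
    (hcor : ∀ r s, |∫ x, F r x * F s x ∂μ| ≤ G (r - s)) {t : ℝ} (ht : 0 ≤ t) :
    ∫ x, (∫ r in (0 : ℝ)..t, F r x) ^ 2 ∂μ ≤ t * ∫ u in -t..t, G u := by
  set ν := volume.restrict (Ioc (0 : ℝ) t)
  have : IsFiniteMeasure ν := isFiniteMeasure_restrict.2 measure_Ioc_lt_top.ne
  have hprod : Measurable fun q : (ℝ × ℝ) × M => F q.1.1 q.2 * F q.1.2 q.2 :=
    (hF.comp (measurable_fst.fst.prodMk measurable_snd)).mul
      (hF.comp (measurable_fst.snd.prodMk measurable_snd))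
  have hbdd : ∀ r s x, ‖F r x * F s x‖ ≤ B * B := fun r s x => by
    rw [Real.norm_eq_abs, abs_mul]
    exact mul_le_mul (hB r x) (hB s x) (abs_nonneg _) ((abs_nonneg _).trans (hB r x))
  have hcorr : Measurable fun p : ℝ × ℝ => ∫ x, F p.1 x * F p.2 x ∂μ :=
    hprod.stronglyMeasurable.integral_prod_right'.measurable
  have hcorr_bdd : ∀ p : ℝ × ℝ, ‖∫ x, F p.1 x * F p.2 x ∂μ‖ ≤ B * B * μ.real univ := fun p =>
    norm_integral_le_of_norm_le_const (ae_of_all _ fun x => hbdd _ _ x)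
  have hinner : ∀ r ∈ Ioc 0 t, ∫ s, ∫ x, F r x * F s x ∂μ ∂ν ≤ ∫ u in -t..t, G u := by
    intro r hr
    calc ∫ s, ∫ x, F r x * F s x ∂μ ∂ν ≤ ∫ s in (0 : ℝ)..t, G (r - s) := by
          rw [intervalIntegral.integral_of_le ht]
          refine integral_mono
            (Integrable.of_bound (hcorr.comp measurable_prodMk_left).aestronglyMeasurable _
              (ae_of_all _ fun s => hcorr_bdd (r, s))) ?_ fun s => (le_abs_self _).trans (hcor r s)
          exact (hG.comp (continuous_const.sub continuous_id)).integrableOn_Ioc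
      _ ≤ ∫ u in -t..t, G u := intervalIntegral_comp_sub_le hG hG0 (Ioc_subset_Icc_self hr)
  calc ∫ x, (∫ r in (0 : ℝ)..t, F r x) ^ 2 ∂μ
      = ∫ x, ∫ p, F p.1 x * F p.2 x ∂(ν.prod ν) ∂μ := by
        congr 1 with x
        rw [intervalIntegral.integral_of_le ht, sq]
        exact (integral_prod_mul (fun r => F r x) (fun r => F r x)).symm
    _ = ∫ p, ∫ x, F p.1 x * F p.2 x ∂μ ∂(ν.prod ν) :=
        integral_integral_swap (Integrable.of_bound
          (hprod.comp measurable_swap).aestronglyMeasurable _ (ae_of_all _ fun q => hbdd _ _ _))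
    _ = ∫ r, ∫ s, ∫ x, F r x * F s x ∂μ ∂ν ∂ν :=
        integral_prod _ (Integrable.of_bound hcorr.aestronglyMeasurable _ (ae_of_all _ hcorr_bdd))
    _ ≤ ∫ _ in Ioc 0 t, ∫ u in -t..t, G u :=
        setIntegral_mono_on (Measure.integrableOn_of_bounded measure_Ioc_lt_top.ne
          hcorr.stronglyMeasurable.integral_prod_right'.aestronglyMeasurable
          (ae_of_all _ fun r => norm_integral_le_of_norm_le_const
            (ae_of_all _ fun s => hcorr_bdd (r, s))))
          (integrableOn_const measure_Ioc_lt_top.ne) measurableSet_Ioc hinner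
    _ = t * ∫ u in -t..t, G u := by simp [ht]

end SecondMoment

section Flow

variable {M : Type*} [MeasurableSpace M] {μ : Measure M} {φ : ℝ → M → M}

theorem integral_comp_flow_mul_comp_flow (hadd : ∀ s t, φ (s + t) = φ s ∘ φ t)
    (hmp : ∀ t, MeasurePreserving (φ t) μ μ) {f g : M → ℝ} (hf : Measurable f)
    (hg : Measurable g) (r s : ℝ) :
    ∫ x, f (φ r x) * g (φ s x) ∂μ = ∫ x, f (φ (r - s) x) * g x ∂μ := by
  have hshift : ∀ x, φ r x = φ (r - s) (φ s x) := fun x => by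
    rw [← comp_apply (f := φ (r - s)), ← hadd, sub_add_cancel]
  calc ∫ x, f (φ r x) * g (φ s x) ∂μ
      = ∫ x, (fun y => f (φ (r - s) y) * g y) (φ s x) ∂μ := by simp only [hshift]
    _ = ∫ y, f (φ (r - s) y) * g y ∂(μ.map (φ s)) := (integral_map (hmp s).measurable.aemeasurable
        ((hf.comp (hmp _).measurable).mul hg).aestronglyMeasurable).symm
    _ = ∫ x, f (φ (r - s) x) * g x ∂μ := by rw [(hmp s).map_eq]

theorem abs_integral_comp_flow_mul_comp_flow_le [IsProbabilityMeasure μ]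
    (hadd : ∀ s t, φ (s + t) = φ s ∘ φ t) (hmp : ∀ t, MeasurePreserving (φ t) μ μ)
    {f : M → ℝ} (hf : Measurable f) {S C ηt : ℝ} (hfS : ∀ x, |f x| ≤ S)
    (hdecay : ∀ t, 1 ≤ t → |∫ x, f (φ t x) * f x ∂μ| ≤ C * S ^ 2 * t ^ (-ηt)) (r s : ℝ) :
    |∫ x, f (φ r x) * f (φ s x) ∂μ| ≤ max C 1 * S ^ 2 * (max |r - s| 1) ^ (-ηt) := by
  have hfar : ∀ r s, 1 ≤ r - s →
      |∫ x, f (φ r x) * f (φ s x) ∂μ| ≤ max C 1 * S ^ 2 * (r - s) ^ (-ηt) := fun r s h => by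
    rw [integral_comp_flow_mul_comp_flow hadd hmp hf hf]
    exact (hdecay _ h).trans (by gcongr; exact le_max_left _ _)
  rcases le_or_gt 1 |r - s| with h | h
  · rcases le_abs'.1 h with h' | h'
    · simp_rw [mul_comm (f (φ r _))]
      rw [max_eq_left h, abs_of_neg (by linarith : r - s < 0), neg_sub]
      exact hfar s r (by linarith)
    · rw [max_eq_left h, abs_of_pos (by linarith : 0 < r - s)]
      exact hfar r s h'
  · rw [max_eq_right h.le, Real.one_rpow, mul_one]
    calc |∫ x, f (φ r x) * f (φ s x) ∂μ| ≤ S * S * μ.real univ := by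
          rw [← Real.norm_eq_abs]
          refine norm_integral_le_of_norm_le_const (ae_of_all _ fun x => ?_)
          rw [Real.norm_eq_abs, abs_mul]
          exact mul_le_mul (hfS _) (hfS _) (abs_nonneg _) ((abs_nonneg _).trans (hfS x))
      _ ≤ max C 1 * S ^ 2 := by
          rw [probReal_univ, mul_one, ← sq]
          exact le_mul_of_one_le_left (sq_nonneg S) (le_max_right _ _)

theorem integral_sq_intervalIntegral_comp_flow_le [IsProbabilityMeasure μ]
    (hφ : Measurable (uncurry φ)) (hadd : ∀ s t, φ (s + t) = φ s ∘ φ t)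
    (hmp : ∀ t, MeasurePreserving (φ t) μ μ) {f : M → ℝ} (hf : Measurable f) {S C ηt : ℝ}
    (hηt : ηt ∈ Ico 0 1) (hfS : ∀ x, |f x| ≤ S)
    (hdecay : ∀ t, 1 ≤ t → |∫ x, f (φ t x) * f x ∂μ| ≤ C * S ^ 2 * t ^ (-ηt)) {t : ℝ}
    (ht : 0 ≤ t) :
    ∫ x, (∫ r in (0 : ℝ)..t, f (φ r x)) ^ 2 ∂μ ≤ 2 * max C 1 * S ^ 2 / (1 - ηt) * t ^ (2 - ηt) := by
  have hC : 0 ≤ max C 1 * S ^ 2 := mul_nonneg (zero_le_one.trans (le_max_right _ _)) (sq_nonneg S)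
  calc ∫ x, (∫ r in (0 : ℝ)..t, f (φ r x)) ^ 2 ∂μ
      ≤ t * ∫ u in -t..t, max C 1 * S ^ 2 * (max |u| 1) ^ (-ηt) :=
        integral_sq_intervalIntegral_le (F := fun r x => f (φ r x)) (hf.comp hφ)
          (fun _ _ => hfS _) (continuous_const.mul (continuous_max_abs_one_rpow _))
          (fun u => mul_nonneg hC (Real.rpow_nonneg (zero_le_one.trans (le_max_right _ _)) _))
          (abs_integral_comp_flow_mul_comp_flow_le hadd hmp hf hfS hdecay)
          ht
    _ ≤ t * (max C 1 * S ^ 2 * (2 / (1 - ηt) * t ^ (1 - ηt))) := by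
        rw [intervalIntegral.integral_const_mul]
        gcongr
        exact intervalIntegral_max_abs_one_rpow_neg_le hηt ht
    _ = 2 * max C 1 * S ^ 2 / (1 - ηt) * t ^ (2 - ηt) := by
        rw [show 2 - ηt = 1 + (1 - ηt) by ring, Real.rpow_add' ht (by linarith [hηt.2]),
          Real.rpow_one]
        ring

theorem exists_forall_abs_intervalIntegral_comp_flow_le [IsProbabilityMeasure μ]
    (hφ : Measurable (uncurry φ)) (hadd : ∀ s t, φ (s + t) = φ s ∘ φ t)
    (hmp : ∀ t, MeasurePreserving (φ t) μ μ) {f : M → ℝ} (hf : Measurable f) {S C ηt η : ℝ}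
    {b : ℕ} (hηt : ηt ∈ Ico 0 1) (hfS : ∀ x, |f x| ≤ S)
    (hdecay : ∀ t, 1 ≤ t → |∫ x, f (φ t x) * f x ∂μ| ≤ C * S ^ 2 * t ^ (-ηt))
    (hbη : b * η < 1) (hgain : 1 < b * (ηt - 2 * η)) {c ω : ℝ} (hc : 0 < c) (hω : 0 < ω) :
    ∃ Y m, MeasurableSet Y ∧ ENNReal.ofReal (1 - ω) ≤ μ Y ∧ 1 ≤ m ∧
      ∀ x ∈ Y, ∀ t, m ≤ t → |∫ r in (0 : ℝ)..t, f (φ r x)| ≤ c * t ^ (1 - η) :=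
  exists_forall_abs_le_rpow_of_integral_sq_le
    (measurable_intervalIntegral_of_uncurry (F := fun r x => f (φ r x)) (hf.comp hφ) 0)
    (fun _ => intervalIntegral.integral_same)
    (fun x _ _ hst => abs_intervalIntegral_sub_intervalIntegral_le
      (intervalIntegrable_of_abs_le (hf.comp (hφ.comp measurable_prodMk_right)) fun r => hfS _)
      (fun r => hfS _) hst)
    (fun t ht => integral_sq_intervalIntegral_comp_flow_le hφ hadd hmp hf hηt hfS hdecay
      (by linarith))
    hbη hgain hc hω

end Flow

theorem abs_sub_apply_le_of_abs_apply_sub_le {ξ : ℝ → ℝ} {C ε η m u : ℝ} (hC : 1 ≤ C)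
    (hε : 0 ≤ ε) (hη : η ∈ Icc 0 1) (hm : 0 ≤ m) (hξ0 : ξ 0 = 0)
    (hξ : ∀ a b, a ≤ b → ξ b - ξ a ∈ Icc (C⁻¹ * (b - a)) (C * (b - a)))
    (hbound : ∀ v, m ≤ v → |ξ v - v| ≤ ε * v ^ (1 - η)) (hu : C * m ≤ ξ u) :
    |u - ξ u| ≤ ε * C * ξ u ^ (1 - η) := by
  have hC0 : 0 < C := one_pos.trans_le hC
  have hu0 : 0 ≤ u := by
    by_contra! hneg
    have h1 := (hξ u 0 hneg.le).1
    have h2 : 0 < C⁻¹ * (0 - u) := mul_pos (inv_pos.2 hC0) (by linarith)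
    nlinarith
  obtain ⟨hlow, hup⟩ := hξ 0 u hu0
  rw [hξ0, sub_zero, sub_zero] at hlow hup
  have hmu : m ≤ u := le_of_mul_le_mul_left (hu.trans hup) hC0
  have huξ : u ≤ C * ξ u := by
    have := mul_le_mul_of_nonneg_left hlow hC0.le
    rwa [← mul_assoc, mul_inv_cancel₀ hC0.ne', one_mul] at this
  have hξu : 0 ≤ ξ u := (mul_nonneg hC0.le hm).trans hu
  have hCpow : C ^ (1 - η) ≤ C := by
    simpa using Real.rpow_le_rpow_of_exponent_le hC (by linarith [hη.1] : 1 - η ≤ 1)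
  calc |u - ξ u| = |ξ u - u| := abs_sub_comm _ _
    _ ≤ ε * u ^ (1 - η) := hbound u hmu
    _ ≤ ε * (C * ξ u) ^ (1 - η) := by gcongr; linarith [hη.2]
    _ = ε * C ^ (1 - η) * ξ u ^ (1 - η) := by
        rw [Real.mul_rpow hC0.le hξu, mul_assoc]
    _ ≤ ε * C * ξ u ^ (1 - η) := by gcongr

theorem exists_nat_mul_lt_one_lt_mul {ηt : ℝ} (hηt : ηt ∈ Ioo 0 1) :
    ∃ b : ℕ, b * (ηt / 8) < 1 ∧ 1 < b * (ηt - 2 * (ηt / 8)) := by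
  obtain ⟨h0, h1⟩ := hηt
  refine ⟨⌈2 / ηt⌉₊, ?_, ?_⟩
  · have := Nat.ceil_lt_add_one (div_pos two_pos h0).le
    have : (⌈2 / ηt⌉₊ : ℝ) * ηt < (2 / ηt + 1) * ηt := by gcongr
    rw [add_mul, div_mul_cancel₀ _ h0.ne'] at this
    nlinarith
  · have := (div_le_iff₀ h0).1 (Nat.le_ceil (2 / ηt))
    nlinarith

end TimeChange

open TimeChange

theorem time_change_cocycle_bound_general (C_M ηt S Cα : ℝ)
    (hη : ηt ∈ Set.Ioo (0 : ℝ) 1) (hCα : 1 < Cα) :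
    ∃ η : ℝ, η ∈ Set.Ioo (0 : ℝ) (1 / 4) ∧
      ∀ (M : Type) [MeasurableSpace M] (μ : Measure M) [IsProbabilityMeasure μ]
        (φ : ℝ → M → M) (α : M → ℝ) (w : M → ℝ → ℝ),
        Measurable (Function.uncurry φ) → φ 0 = id →
        (∀ s t, φ (s + t) = φ s ∘ φ t) → (∀ t, MeasurePreserving (φ t) μ μ) →
        Measurable α → (∀ x, Cα⁻¹ ≤ α x ∧ α x ≤ Cα) →
        (∫ x, α x ∂μ) = 1 →
        (∀ x, |α x - 1| ≤ S) →
        (∀ t : ℝ, 1 ≤ t →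
          |∫ x, (α (φ t x) - 1) * (α x - 1) ∂μ| ≤ C_M * S ^ 2 * t ^ (-ηt)) →
        (∀ x t, (∫ r in (0 : ℝ)..(w x t), α (φ r x)) = t) →
        (∀ x t, w x (∫ r in (0 : ℝ)..t, α (φ r x)) = t) →
        ∀ ω : ℝ, 0 < ω →
          ∃ (Y : Set M) (m : ℝ), MeasurableSet Y ∧ ENNReal.ofReal (1 - ω) ≤ μ Y ∧ 1 ≤ m ∧
            ∀ x ∈ Y, ∀ t : ℝ, m ≤ t →
              |(∫ r in (0 : ℝ)..t, α (φ r x)) - t| ≤ (Cα ^ 4)⁻¹ * t ^ (1 - η) ∧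
              |w x t - t| ≤ (Cα ^ 4)⁻¹ * t ^ (1 - η) := by
  obtain ⟨b, hbη, hgain⟩ := exists_nat_mul_lt_one_lt_mul hη
  refine ⟨ηt / 8, ⟨by linarith [hη.1], by linarith [hη.2]⟩, ?_⟩
  intro M _ μ _ φ α w hφ _ hadd hmp hα hαC _ hS hdecay hw _ ω hω
  have hCα0 : 0 < Cα := one_pos.trans hCα
  have hint : ∀ x a b, IntervalIntegrable (fun r => α (φ r x)) volume a b := fun x =>
    intervalIntegrable_of_abs_le (hα.comp (hφ.comp measurable_prodMk_right)) (B := Cα)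
      fun r => abs_le.2 ⟨by linarith [(hαC (φ r x)).1, inv_pos.2 hCα0], (hαC _).2⟩
  obtain ⟨Y, m, hYm, hY, hm1, hYbound⟩ := exists_forall_abs_intervalIntegral_comp_flow_le hφ hadd
    hmp (hα.sub measurable_const) (Ioo_subset_Ico_self hη) hS hdecay hbη hgain
    (inv_pos.2 (pow_pos hCα0 5)) hω
  refine ⟨Y, Cα * m, hYm, hY, by nlinarith, fun x hx t ht => ?_⟩
  have hξ : ∀ v, m ≤ v →
      |(∫ r in (0 : ℝ)..v, α (φ r x)) - v| ≤ (Cα ^ 5)⁻¹ * v ^ (1 - ηt / 8) := fun v hv => by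
    simpa [intervalIntegral.integral_sub (hint x 0 v) intervalIntegrable_const]
      using hYbound x hx v hv
  constructor
  · exact (hξ t (by nlinarith)).trans (mul_le_mul_of_nonneg_right
      (inv_anti₀ (by positivity) (pow_le_pow_right₀ hCα.le (by norm_num)))
      (Real.rpow_nonneg (by nlinarith) _))
  · have := abs_sub_apply_le_of_abs_apply_sub_le (ξ := fun v => ∫ r in (0 : ℝ)..v, α (φ r x))
      hCα.le (by positivity) ⟨by linarith [hη.1], by linarith [hη.2]⟩ (by linarith)
      intervalIntegral.integral_same
      (fun a b hab => intervalIntegral_sub_intervalIntegral_mem_Icc (hint x) (fun r => hαC _) hab)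
      hξ (u := w x t) (by simpa only [hw] using ht)
    have hCα5 : (Cα ^ 5)⁻¹ * Cα = (Cα ^ 4)⁻¹ := by field_simp
    simpa only [hw, hCα5] using this

/-- Corollary on the cocycles `ξ` and `w` of a time-change: if `α` is a time-change function
bounded between `C_α⁻¹` and `C_α`, with mean one, whose correlations decay polynomially,
then there is `η ∈ (0, 1/4)` (depending only on `C_M, η̃, S, C_α`) such that, for every
`ω > 0`, on a set `Y` of measure `≥ 1 - ω` and for all `t ≥ m`,
`|ξ(x,t) - t| ≤ C_α⁻⁴ t^(1-η)` and `|w(x,t) - t| ≤ C_α⁻⁴ t^(1-η)`, where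
`ξ(x,t) = ∫₀^t α(φ^r x) dr` and `w(x,·)` is its inverse. -/
theorem time_change_cocycle_bound (C_M ηt S Cα : ℝ)
    (hCM : 0 < C_M) (hη : ηt ∈ Set.Ioo (0 : ℝ) 1) (hCα : 1 < Cα) :
    ∃ η : ℝ, η ∈ Set.Ioo (0 : ℝ) (1 / 4) ∧
      ∀ (M : Type) [MeasurableSpace M] (μ : Measure M) [IsProbabilityMeasure μ]
        (φ : ℝ → M → M) (α : M → ℝ) (w : M → ℝ → ℝ),
        Measurable (Function.uncurry φ) → φ 0 = id →
        (∀ s t, φ (s + t) = φ s ∘ φ t) → (∀ t, MeasurePreserving (φ t) μ μ) →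
        Measurable α → (∀ x, Cα⁻¹ ≤ α x ∧ α x ≤ Cα) →
        (∫ x, α x ∂μ) = 1 →
        (∀ x, |α x - 1| ≤ S) →
        (∀ t : ℝ, 1 ≤ t →
          |∫ x, (α (φ t x) - 1) * (α x - 1) ∂μ| ≤ C_M * S ^ 2 * t ^ (-ηt)) →
        (∀ x t, (∫ r in (0 : ℝ)..(w x t), α (φ r x)) = t) →
        (∀ x t, w x (∫ r in (0 : ℝ)..t, α (φ r x)) = t) →
        ∀ ω : ℝ, 0 < ω →
          ∃ (Y : Set M) (m : ℝ), MeasurableSet Y ∧ ENNReal.ofReal (1 - ω) ≤ μ Y ∧ 1 ≤ m ∧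
            ∀ x ∈ Y, ∀ t : ℝ, m ≤ t →
              |(∫ r in (0 : ℝ)..t, α (φ r x)) - t| ≤ (Cα ^ 4)⁻¹ * t ^ (1 - η) ∧
              |w x t - t| ≤ (Cα ^ 4)⁻¹ * t ^ (1 - η) :=
  time_change_cocycle_bound_general C_M ηt S Cα hη hCα
end

section
/- Let G₁ and G₂ be groups acting on the right on sets M₁ and M₂ respectively, and let u₁ : ℝ → G₁ and u₂ : ℝ → G₂ be group homomorphisms from (ℝ, +). Let C ≥ 1 and let α_i : M_i → ℝ satisfy C^{−1} ≤ α_i ≤ C, with s ↦ α_i(p · u_i(s)) Lebesgue measurable for every p ∈ M_i. Let ψ : M₁ → M₂ and z : M₁ × ℝ → ℝ satisfy, for all x ∈ M₁ and T ∈ ℝ: ψ(x · u₁(T)) = ψ(x) · u₂(z(x, T)) and ∫₀^{z(x,T)} α₂(ψ(x) · u₂(s)) ds = ∫₀^T α₁(x · u₁(s)) ds. Let c > 0, let g ∈ G₁ satisfy g · u₁(ct) = u₁(t) · g for all t ∈ ℝ, let Φ ∈ G₂ satisfy Φ · u₂(ct) = u₂(t) · Φ for all t ∈ ℝ, and let β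 : M₁ → ℝ satisfy, for all x ∈ M₁ and t ∈ ℝ: ψ(x · g) = ψ(x) · Φ · u₂(β(x)) and β(x · u₁(t)) − β(x) = z(x · g, ct) − c · z(x, t). Define f : M₁ → ℝ by f(x) = (1/c) ∫₀^{β(x)} α₂(ψ(x) · Φ · u₂(s)) ds. Then for all x ∈ M₁ and t ∈ ℝ: ∫₀^t α₁(x · u₁(s) · g) ds − ∫₀^{z(x,t)} α₂(ψ(x) · u₂(s) · Φ) ds = f(x · u₁(t)) − f(x). -/
/-!
Write `τ(p, T) = ∫₀^T α₂(p · u₂(s)) ds` and `q = ψ(x) · Φ`. Because `g` and `Φ` conjugate `u_i(ct)`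
to `u_i(t)`, the substitution `s ↦ cs` turns the two integrals on the left into
`c⁻¹ τ(q · u₂(β x), z(x g, ct))` (via the conjugacy relation for `ψ` at `x g`) and
`c⁻¹ τ(q, c z(x, t))`, while the first term of `f(x u₁(t))` is `c⁻¹ τ(q · u₂(c z(x, t)), β(x u₁(t)))`.
The identity is then the cocycle relation `τ(p, a + b) = τ(p, a) + τ(p · u₂(a), b)` applied to
`τ(q, β x + z(x g, ct)) = τ(q, c z(x, t) + β(x u₁(t)))`.
-/

open MeasureTheory

theorem Measurable.intervalIntegrable_of_bounds {f : ℝ → ℝ} (hf : Measurable f) {m M : ℝ}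
    (hbounds : ∀ s, m ≤ f s ∧ f s ≤ M) (a b : ℝ) : IntervalIntegrable f volume a b :=
  (intervalIntegrable_const : IntervalIntegrable (fun _ => Max.max |m| |M|) volume a b).mono_fun'
    hf.aestronglyMeasurable (ae_of_all _ fun s => abs_le_max_abs_abs (hbounds s).1 (hbounds s).2)

section TimeChange

variable {G M : Type*} [Mul G] (act : M → G → M) (u : ℝ → G) (α : M → ℝ)

noncomputable def timeChange (p : M) (T : ℝ) : ℝ :=
  ∫ s in (0 : ℝ)..T, α (act p (u s))

variable {act u α}

theorem timeChange_add (hact : ∀ p g h, act (act p g) h = act p (g * h))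
    (hu : ∀ s t, u (s + t) = u s * u t) {p : M}
    (hint : ∀ a b, IntervalIntegrable (fun s => α (act p (u s))) volume a b) (a b : ℝ) :
    timeChange act u α p (a + b) =
      timeChange act u α p a + timeChange act u α (act p (u a)) b := by
  have hshift : ∀ s, α (act (act p (u a)) (u s)) = α (act p (u (a + s))) := by
    intro s
    rw [hact, hu]
  simp only [timeChange, hshift]
  rw [intervalIntegral.integral_comp_add_left (fun s => α (act p (u s))) a, add_zero,
    intervalIntegral.integral_add_adjacent_intervals (hint _ _) (hint _ _)]

theorem integral_act_mul_right_eq_timeChange (hact : ∀ p g h, act (act p g) h = act p (g * h))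
    {c : ℝ} (hc : c ≠ 0) {g : G} (hg : ∀ t, g * u (c * t) = u t * g) (p : M) (T : ℝ) :
    ∫ s in (0 : ℝ)..T, α (act (act p (u s)) g) = c⁻¹ * timeChange act u α (act p g) (c * T) := by
  have hconj : ∀ s, act (act p (u s)) g = act (act p g) (u (c * s)) := by
    intro s
    rw [hact, hact, hg]
  simp only [hconj]
  rw [intervalIntegral.integral_comp_mul_left (fun s => α (act (act p g) (u s))) hc, mul_zero,
    smul_eq_mul]
  rfl

end TimeChange

theorem time_change_cohomology_general {G₁ G₂ M₁ M₂ : Type*} [Group G₁] [Group G₂]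
    (act₁ : M₁ → G₁ → M₁) (act₂ : M₂ → G₂ → M₂)
    (hact₁mul : ∀ p g h, act₁ (act₁ p g) h = act₁ p (g * h))
    (hact₂mul : ∀ p g h, act₂ (act₂ p g) h = act₂ p (g * h))
    (u₁ : ℝ → G₁) (u₂ : ℝ → G₂)
    (hu₂ : ∀ s t, u₂ (s + t) = u₂ s * u₂ t)
    (C : ℝ)
    (α₁ : M₁ → ℝ) (α₂ : M₂ → ℝ)
    (hα₂ : ∀ p, C⁻¹ ≤ α₂ p ∧ α₂ p ≤ C)
    (hα₂m : ∀ p, Measurable fun s => α₂ (act₂ p (u₂ s)))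
    (ψ : M₁ → M₂) (z : M₁ → ℝ → ℝ)
    (hψ : ∀ (x : M₁) (T : ℝ), ψ (act₁ x (u₁ T)) = act₂ (ψ x) (u₂ (z x T)))
    (hz : ∀ (x : M₁) (T : ℝ),
      (∫ s in (0 : ℝ)..(z x T), α₂ (act₂ (ψ x) (u₂ s))) =
        ∫ s in (0 : ℝ)..T, α₁ (act₁ x (u₁ s)))
    (c : ℝ) (hc : 0 < c)
    (g : G₁) (hg : ∀ t : ℝ, g * u₁ (c * t) = u₁ t * g)
    (Φ : G₂) (hΦ : ∀ t : ℝ, Φ * u₂ (c * t) = u₂ t * Φ)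
    (β : M₁ → ℝ)
    (hβ1 : ∀ x : M₁, ψ (act₁ x g) = act₂ (act₂ (ψ x) Φ) (u₂ (β x)))
    (hβ2 : ∀ (x : M₁) (t : ℝ),
      β (act₁ x (u₁ t)) - β x = z (act₁ x g) (c * t) - c * z x t) :
    ∀ (x : M₁) (t : ℝ),
      (∫ s in (0 : ℝ)..t, α₁ (act₁ (act₁ x (u₁ s)) g)) -
          (∫ s in (0 : ℝ)..(z x t), α₂ (act₂ (act₂ (ψ x) (u₂ s)) Φ)) =
        (1 / c) * (∫ s in (0 : ℝ)..(β (act₁ x (u₁ t))),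
            α₂ (act₂ (act₂ (ψ (act₁ x (u₁ t))) Φ) (u₂ s))) -
        (1 / c) * ∫ s in (0 : ℝ)..(β x), α₂ (act₂ (act₂ (ψ x) Φ) (u₂ s)) := by
  intro x t
  rw [integral_act_mul_right_eq_timeChange hact₁mul hc.ne' hg,
    integral_act_mul_right_eq_timeChange hact₂mul hc.ne' hΦ]
  set q := act₂ (ψ x) Φ
  have hint := (hα₂m q).intervalIntegrable_of_bounds fun _ => hα₂ _
  have hz_at_g : timeChange act₁ u₁ α₁ (act₁ x g) (c * t) =
      timeChange act₂ u₂ α₂ (act₂ q (u₂ (β x))) (z (act₁ x g) (c * t)) := by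
    rw [← hβ1]
    exact (hz _ _).symm
  have hψ_at_t : act₂ (ψ (act₁ x (u₁ t))) Φ = act₂ q (u₂ (c * z x t)) := by
    rw [hψ, hact₂mul, hact₂mul, ← hΦ]
  have hcocycle := timeChange_add hact₂mul hu₂ hint (β x) (z (act₁ x g) (c * t))
  rw [show β x + z (act₁ x g) (c * t) = c * z x t + β (act₁ x (u₁ t)) by linarith [hβ2 x t],
    timeChange_add hact₂mul hu₂ hint] at hcocycle
  rw [hz_at_g, hψ_at_t, one_div]
  unfold timeChange at hcocycle ⊢
  linear_combination -c⁻¹ * hcocycle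

/-- Cohomology of the time-change functions along the normaliser
(Corollary 4.6 / Theorem C): with a conjugacy `ψ` between the time-changes, a normalising
element `g` of `u₁` (with `g u₁(ct) = u₁(t) g`), a corresponding element `Φ` normalising
`u₂`, and `β` satisfying the stated cocycle relations, the difference
`∫₀^t α₁(x u₁(s) g) ds − ∫₀^{z(x,t)} α₂(ψ(x) u₂(s) Φ) ds` is the coboundary
`f(x u₁(t)) − f(x)` of `f(x) = (1/c) ∫₀^{β(x)} α₂(ψ(x) Φ u₂(s)) ds`. -/
theorem time_change_cohomology {G₁ G₂ M₁ M₂ : Type*} [Group G₁] [Group G₂]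
    (act₁ : M₁ → G₁ → M₁) (act₂ : M₂ → G₂ → M₂)
    (hact₁id : ∀ p, act₁ p 1 = p)
    (hact₁mul : ∀ p g h, act₁ (act₁ p g) h = act₁ p (g * h))
    (hact₂id : ∀ p, act₂ p 1 = p)
    (hact₂mul : ∀ p g h, act₂ (act₂ p g) h = act₂ p (g * h))
    (u₁ : ℝ → G₁) (u₂ : ℝ → G₂)
    (hu₁ : ∀ s t, u₁ (s + t) = u₁ s * u₁ t) (hu₂ : ∀ s t, u₂ (s + t) = u₂ s * u₂ t)
    (C : ℝ) (hC : 1 ≤ C)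
    (α₁ : M₁ → ℝ) (α₂ : M₂ → ℝ)
    (hα₁ : ∀ p, C⁻¹ ≤ α₁ p ∧ α₁ p ≤ C) (hα₂ : ∀ p, C⁻¹ ≤ α₂ p ∧ α₂ p ≤ C)
    (hα₁m : ∀ p, Measurable fun s => α₁ (act₁ p (u₁ s)))
    (hα₂m : ∀ p, Measurable fun s => α₂ (act₂ p (u₂ s)))
    (ψ : M₁ → M₂) (z : M₁ → ℝ → ℝ)
    (hψ : ∀ (x : M₁) (T : ℝ), ψ (act₁ x (u₁ T)) = act₂ (ψ x) (u₂ (z x T)))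
    (hz : ∀ (x : M₁) (T : ℝ),
      (∫ s in (0 : ℝ)..(z x T), α₂ (act₂ (ψ x) (u₂ s))) =
        ∫ s in (0 : ℝ)..T, α₁ (act₁ x (u₁ s)))
    (c : ℝ) (hc : 0 < c)
    (g : G₁) (hg : ∀ t : ℝ, g * u₁ (c * t) = u₁ t * g)
    (Φ : G₂) (hΦ : ∀ t : ℝ, Φ * u₂ (c * t) = u₂ t * Φ)
    (β : M₁ → ℝ)
    (hβ1 : ∀ x : M₁, ψ (act₁ x g) = act₂ (act₂ (ψ x) Φ) (u₂ (β x)))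
    (hβ2 : ∀ (x : M₁) (t : ℝ),
      β (act₁ x (u₁ t)) - β x = z (act₁ x g) (c * t) - c * z x t) :
    ∀ (x : M₁) (t : ℝ),
      (∫ s in (0 : ℝ)..t, α₁ (act₁ (act₁ x (u₁ s)) g)) -
          (∫ s in (0 : ℝ)..(z x t), α₂ (act₂ (act₂ (ψ x) (u₂ s)) Φ)) =
        (1 / c) * (∫ s in (0 : ℝ)..(β (act₁ x (u₁ t))),
            α₂ (act₂ (act₂ (ψ (act₁ x (u₁ t))) Φ) (u₂ s))) -
        (1 / c) * ∫ s in (0 : ℝ)..(β x), α₂ (act₂ (act₂ (ψ x) Φ) (u₂ s)) :=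
  time_change_cohomology_general act₁ act₂ hact₁mul hact₂mul u₁ u₂ hu₂ C α₁ α₂ hα₂ hα₂m ψ z hψ hz c
    hc g hg Φ hΦ β hβ1 hβ2
end
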